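/- arXiv:1207.2652 — 8 statements merged into one kernel-verified Lean document; each statement's English description precedes it below -/
import Mathlib

section
/- Let X be a topological vector space with topology τ and J : X → [0,∞]. Let D ⊆ dom J satisfy t·cl(D) ⊆ D for all t ∈ (0,1) (where cl(D) is the τ-closure of D). If J is ru-usc in D, then for every u ∈ cl(D) the limit lim_{t→1⁻} J(tu) exists, i.e., liminf_{t→1⁻} J(tu) = limsup_{t→1⁻} J(tu). -/
open Filter Set Topology Pointwise
open scoped ENNReal NNReal

/-- `Δ^a_{J,D}(t) := sup_{u∈D} (J(tu) − J(u))/(a + J(u))`, computed in `EReal`. -/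
noncomputable def ruDelta {X : Type*} [AddCommGroup X] [Module ℝ X]
    (J : X → ENNReal) (D : Set X) (a : ℝ) (t : ℝ) : EReal :=
  ⨆ u ∈ D, (((J (t • u)) : EReal) - ((J u) : EReal)) / ((a : EReal) + ((J u) : EReal))

/-- If `D ⊆ dom J` is τ-star shaped w.r.t. `0` (`t·cl(D) ⊆ D` for `t ∈ (0,1)`) and `J` is
ru-usc in `D`, then for every `u ∈ cl(D)` the limit `lim_{t→1⁻} J(tu)` exists, i.e.
`liminf = limsup`. -/
theorem stmt1 {X : Type*} [AddCommGroup X] [Module ℝ X] [TopologicalSpace X]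
    (J : X → ENNReal) (D : Set X) (hD : D ⊆ {u | J u < ⊤})
    (hstar : ∀ t ∈ Set.Ioo (0 : ℝ) 1, t • closure D ⊆ D)
    (hru : ∃ a : ℝ, 0 < a ∧
      Filter.limsup (fun t : ℝ => ruDelta J D a t) (nhdsWithin 1 (Set.Iio 1)) ≤ 0) :
    ∀ u ∈ closure D,
      Filter.liminf (fun t : ℝ => J (t • u)) (nhdsWithin 1 (Set.Iio 1)) =
        Filter.limsup (fun t : ℝ => J (t • u)) (nhdsWithin 1 (Set.Iio 1)) := by
  intro u hu
  obtain ⟨a, ha, hΔ⟩ := hru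
  set l := nhdsWithin (1 : ℝ) (Set.Iio 1) with hldef
  set f : ℝ → ℝ≥0∞ := fun t => J (t • u) with hfdef
  refine le_antisymm liminf_le_limsup ?_
  refine le_of_forall_gt_imp_ge_of_dense fun b hb => ?_
  rcases eq_top_or_lt_top b with rfl | hbt
  · exact le_top
  set br := b.toReal with hbrdef
  refine ENNReal.le_of_forall_pos_le_add fun η hη _ => ?_
  set c : ℝ≥0∞ := ENNReal.ofReal a + b with hcdef
  have hct : c ≠ ⊤ := ENNReal.add_ne_top.mpr ⟨ENNReal.ofReal_ne_top, hbt.ne⟩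
  have hcr : 0 ≤ c.toReal := ENNReal.toReal_nonneg
  set ε : ℝ := (η : ℝ) / (c.toReal + 1) with hεdef
  have hεpos : 0 < ε := div_pos (by exact_mod_cast hη) (by linarith)
  have hev : ∀ᶠ r in l, ruDelta J D a r < (ε : EReal) :=
    eventually_lt_of_limsup_lt (lt_of_le_of_lt hΔ (by exact_mod_cast hεpos))
  obtain ⟨δ, hδ1, hδsub⟩ := mem_nhdsLT_iff_exists_Ioo_subset.mp hev
  have hfreq : ∃ᶠ s in l, f s < b := frequently_lt_of_liminf_lt (by isBoundedDefault) hb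
  have hmain : ∀ᶠ t in l, f t ≤ b + ENNReal.ofReal ε * c := by
    have hδ'1 : max δ 0 < 1 := max_lt hδ1 one_pos
    filter_upwards [Ioo_mem_nhdsLT_of_mem (⟨hδ'1, le_refl (1:ℝ)⟩ : (1:ℝ) ∈ Set.Ioc (max δ 0) 1)]
    intro t ht
    obtain ⟨ht0', ht1⟩ := ht
    have ht0 : 0 < t := lt_of_le_of_lt (le_max_right δ 0) ht0'
    obtain ⟨s, hsb, hs⟩ :=
      (hfreq.and_eventually (eventually_of_mem
        (Ioo_mem_nhdsLT_of_mem (⟨ht1, le_refl (1:ℝ)⟩ : (1:ℝ) ∈ Set.Ioc t 1))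
        (fun y hy => hy))).exists
    have hs0 : 0 < s := ht0.trans hs.1
    have hsD : s • u ∈ D := hstar s ⟨hs0, hs.2⟩ (Set.smul_mem_smul_set hu)
    have htD : t • u ∈ D := hstar t ⟨ht0, ht1⟩ (Set.smul_mem_smul_set hu)
    have hx : J (t • u) ≠ ⊤ := (hD htD).ne
    have hA : J (s • u) ≠ ⊤ := (hD hsD).ne
    set r : ℝ := t / s with hrdef
    have hr1 : r < 1 := (div_lt_one hs0).mpr hs.1
    have htr : t < r := by
      rw [hrdef, lt_div_iff₀ hs0]
      exact mul_lt_of_lt_one_right ht0 hs.2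
    have hrδ : r ∈ Set.Ioo δ 1 := ⟨lt_of_le_of_lt (le_max_left δ 0) (ht0'.trans htr), hr1⟩
    have hΔr : ruDelta J D a r < (ε : EReal) := hδsub hrδ
    have hsmul : r • (s • u) = t • u := by rw [smul_smul, div_mul_cancel₀ _ hs0.ne']
    have hkey := le_iSup₂ (f := fun (v : X) (_ : v ∈ D) =>
      (((J (r • v)) : EReal) - ((J v) : EReal)) / ((a : EReal) + ((J v) : EReal))) (s • u) hsD
    rw [hsmul] at hkey
    have hlt : (((J (t • u)) : EReal) - ((J (s • u)) : EReal)) /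
        ((a : EReal) + ((J (s • u)) : EReal)) < (ε : EReal) := lt_of_le_of_lt hkey hΔr
    set xr := (J (t • u)).toReal with hxrdef
    set Ar := (J (s • u)).toReal with hArdef
    have hxE : ((J (t • u) : ℝ≥0∞) : EReal) = (xr : EReal) := by
      conv_lhs => rw [← ENNReal.ofReal_toReal hx]
      rw [EReal.coe_ennreal_ofReal, max_eq_left ENNReal.toReal_nonneg]
    have hAE : ((J (s • u) : ℝ≥0∞) : EReal) = (Ar : EReal) := by
      conv_lhs => rw [← ENNReal.ofReal_toReal hA]
      rw [EReal.coe_ennreal_ofReal, max_eq_left ENNReal.toReal_nonneg]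
    rw [hxE, hAE, ← EReal.coe_add, ← EReal.coe_sub, ← EReal.coe_div] at hlt
    have hltR : (xr - Ar) / (a + Ar) < ε := EReal.coe_lt_coe_iff.mp hlt
    have hden : 0 < a + Ar := by
      have : 0 ≤ Ar := ENNReal.toReal_nonneg
      linarith
    have hxr : xr ≤ Ar + ε * (a + Ar) := by
      rw [div_lt_iff₀ hden] at hltR
      linarith
    have hAb : Ar ≤ br := ENNReal.toReal_le_toReal hA hbt.ne |>.mpr hsb.le
    have hfinal : xr ≤ br + ε * (a + br) := by nlinarith
    calc f t = ENNReal.ofReal xr := (ENNReal.ofReal_toReal hx).symm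
      _ ≤ ENNReal.ofReal (br + ε * (a + br)) := ENNReal.ofReal_le_ofReal hfinal
      _ ≤ ENNReal.ofReal br + ENNReal.ofReal (ε * (a + br)) := ENNReal.ofReal_add_le
      _ = b + ENNReal.ofReal ε * ENNReal.ofReal (a + br) := by
          rw [ENNReal.ofReal_toReal hbt.ne, ENNReal.ofReal_mul hεpos.le]
      _ ≤ b + ENNReal.ofReal ε * c := by
          gcongr
          calc ENNReal.ofReal (a + br) ≤ ENNReal.ofReal a + ENNReal.ofReal br :=
                ENNReal.ofReal_add_le
            _ = c := by rw [ENNReal.ofReal_toReal hbt.ne]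
  refine (limsup_le_of_le (by isBoundedDefault) hmain).trans ?_
  gcongr
  have hεc : ε * c.toReal ≤ (η : ℝ) := by
    rw [hεdef, div_mul_eq_mul_div, div_le_iff₀ (by linarith)]
    have : (0:ℝ) ≤ (η : ℝ) := η.coe_nonneg
    nlinarith
  calc ENNReal.ofReal ε * c = ENNReal.ofReal ε * ENNReal.ofReal c.toReal := by
        rw [ENNReal.ofReal_toReal hct]
    _ = ENNReal.ofReal (ε * c.toReal) := (ENNReal.ofReal_mul hεpos.le).symm
    _ ≤ ENNReal.ofReal (η : ℝ) := ENNReal.ofReal_le_ofReal hεc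
    _ = (η : ℝ≥0∞) := ENNReal.ofReal_coe_nnreal
end

section
/- Let X be a topological vector space, J : X → [0,∞], and D ⊆ dom J satisfying t·cl(D) ⊆ D for all t ∈ (0,1). If J is ru-usc in D with constant a > 0, then the function Ĵ(u) := liminf_{t→1⁻} J(tu) is ru-usc in cl(D) ∩ dom Ĵ, with Δ^a_{Ĵ, cl(D)∩dom Ĵ}(t) ≤ Δ^a_{J,D}(t) for all t ∈ (0,1). -/
open Filter Set Topology Pointwise

/-- `Ĵ(u) := liminf_{t→1⁻} J(tu)`. -/
noncomputable def ruHat {X : Type*} [AddCommGroup X] [Module ℝ X]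
    (J : X → ENNReal) (u : X) : ENNReal :=
  Filter.liminf (fun t : ℝ => J (t • u)) (nhdsWithin 1 (Set.Iio 1))

/-! For a fixed `t` and any real `M > Δ^a_{J,D}(t)`, the bound `(J(tv) − J(v))/(a + J(v)) ≤ M`
is equivalent to the affine inequality `J(tv) + a ≤ (1 + M)(a + J(v))`. For `u ∈ cl(D)` it
holds at `v = su ∈ D` for every `s ∈ (0,1)`, and since both sides are monotone and continuous
in `J`, it survives `liminf_{s→1⁻}`, giving the same bound for `Ĵ` at `u`. -/

open scoped ENNReal NNReal

theorem Monotone.map_liminf_le_map_liminf {ι R S : Type*} [CompleteLinearOrder R]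
    [TopologicalSpace R] [OrderTopology R] [CompleteLinearOrder S] [TopologicalSpace S]
    [OrderTopology S] {l : Filter ι} [l.NeBot] {φ ψ : R → S} {f g : ι → R}
    (hφ : Monotone φ) (hφc : Continuous φ) (hψ : Monotone ψ) (hψc : Continuous ψ)
    (h : ∀ᶠ i in l, φ (f i) ≤ ψ (g i)) :
    φ (liminf f l) ≤ ψ (liminf g l) := by
  rw [hφ.map_liminf_of_continuousAt f hφc.continuousAt,
    hψ.map_liminf_of_continuousAt g hψc.continuousAt]
  exact liminf_le_liminf h

theorem EReal.coe_ennreal_sub_div_le_iff {x y : ℝ≥0∞} (hx : x ≠ ⊤) {a : ℝ} (ha : 0 < a)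
    (M : ℝ) :
    ((y : EReal) - x) / (a + x) ≤ M ↔
      y + ENNReal.ofReal a ≤ ENNReal.ofReal (1 + M) * (ENNReal.ofReal a + x) := by
  lift x to ℝ≥0 using hx
  have hax : (0 : ℝ) < a + x := by positivity
  have hxr : ((x : ℝ≥0∞) : EReal) = ((x : ℝ) : EReal) := rfl
  rw [hxr, ← EReal.coe_add]
  rcases eq_or_ne y ⊤ with rfl | hy
  · rw [EReal.coe_ennreal_top, EReal.top_sub_coe,
      EReal.top_div_of_pos_ne_top (EReal.coe_pos.2 hax) (EReal.coe_ne_top _), top_add]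
    simp [ENNReal.mul_ne_top]
  lift y to ℝ≥0 using hy
  have hyr : ((y : ℝ≥0∞) : EReal) = ((y : ℝ) : EReal) := rfl
  rw [hyr, ← EReal.coe_sub, ← EReal.coe_div, EReal.coe_le_coe_iff, div_le_iff₀ hax,
    ← ENNReal.ofReal_coe_nnreal, ← ENNReal.ofReal_coe_nnreal (p := x),
    ← ENNReal.ofReal_add y.coe_nonneg ha.le, ← ENNReal.ofReal_add ha.le x.coe_nonneg,
    ← ENNReal.ofReal_mul' hax.le, ENNReal.ofReal_le_ofReal_iff']
  have hy0 := y.coe_nonneg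
  constructor
  · intro h
    left
    linarith
  · rintro (h | h) <;> linarith

theorem ruDelta_ruHat_le {X : Type*} [AddCommGroup X] [Module ℝ X] [TopologicalSpace X]
    {J : X → ℝ≥0∞} {D : Set X} (hD : D ⊆ {u | J u < ⊤})
    (hstar : ∀ t ∈ Set.Ioo (0 : ℝ) 1, t • closure D ⊆ D) {a : ℝ} (ha : 0 < a) {t : ℝ} :
    ruDelta (ruHat J) (closure D ∩ {u | ruHat J u < ⊤}) a t ≤ ruDelta J D a t := by
  refine iSup₂_le fun u ⟨huD, huT⟩ => EReal.le_of_forall_lt_iff_le.1 fun M hM => ?_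
  have hJ : ∀ v ∈ D, J (t • v) + .ofReal a ≤ .ofReal (1 + M) * (.ofReal a + J v) :=
    fun v hv => (EReal.coe_ennreal_sub_div_le_iff (hD hv).ne ha M).1
      ((le_biSup (fun v => ((J (t • v) : EReal) - J v) / (a + J v)) hv).trans hM.le)
  refine (EReal.coe_ennreal_sub_div_le_iff huT.ne ha M).2 ?_
  refine Monotone.map_liminf_le_map_liminf (φ := (· + ENNReal.ofReal a))
    (ψ := fun z => ENNReal.ofReal (1 + M) * (ENNReal.ofReal a + z))
    (fun _ _ h => by beta_reduce; gcongr) (continuous_add_const _)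
    (fun _ _ h => by beta_reduce; gcongr)
    ((ENNReal.continuous_const_mul ENNReal.ofReal_ne_top).comp (continuous_const_add _)) ?_
  filter_upwards [Ioo_mem_nhdsLT (zero_lt_one' ℝ)] with s hs
  simpa only [smul_comm s t u] using hJ _ (hstar s hs (smul_mem_smul_set huD))

/-- If `J` is ru-usc in `D` (with constant `a > 0`) and `t·cl(D) ⊆ D` for `t ∈ (0,1)`, then
`Ĵ` is ru-usc in `cl(D) ∩ dom Ĵ`, with `Δ^a_{Ĵ,cl(D)∩dom Ĵ}(t) ≤ Δ^a_{J,D}(t)` for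
`t ∈ (0,1)`. -/
theorem stmt2 {X : Type*} [AddCommGroup X] [Module ℝ X] [TopologicalSpace X]
    (J : X → ENNReal) (D : Set X) (hD : D ⊆ {u | J u < ⊤})
    (hstar : ∀ t ∈ Set.Ioo (0 : ℝ) 1, t • closure D ⊆ D)
    (a : ℝ) (ha : 0 < a)
    (hru : Filter.limsup (fun t : ℝ => ruDelta J D a t) (nhdsWithin 1 (Set.Iio 1)) ≤ 0) :
    (∀ t ∈ Set.Ioo (0 : ℝ) 1,
      ruDelta (ruHat J) (closure D ∩ {u | ruHat J u < ⊤}) a t ≤ ruDelta J D a t) ∧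
    Filter.limsup (fun t : ℝ => ruDelta (ruHat J) (closure D ∩ {u | ruHat J u < ⊤}) a t)
      (nhdsWithin 1 (Set.Iio 1)) ≤ 0 :=
  ⟨fun _ _ => ruDelta_ruHat_le hD hstar ha,
    (limsup_le_limsup (.of_forall fun _ => ruDelta_ruHat_le hD hstar ha)).trans hru⟩
end

section
/- Let Ω ⊆ ℝ^d be a nonempty bounded open set and L : Ω × M^{m×d} → [0,∞] Borel measurable. Assume (H1): there is ρ₀ > 0 with ∫_Ω L(x,ξ) dx < ∞ for every matrix ξ with all entries in [−ρ₀, ρ₀]; and (H3): there is C > 0 such that L(x, tξ + (1−t)ζ) ≤ C(1 + L(x,ξ) + L(x,ζ)) for all ξ,ζ ∈ M^{m×d}, x ∈ Ω, t ∈ (0,1). Then ∫_Ω sup_{ζ ∈ Q̄_{ρ₀}(0)} L(x,ζ) dx < ∞, where Q̄_{ρ₀}(0) is the set of matrices with all entries in [−ρ₀, ρ₀]. -/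
/-!
Every matrix of the cube `[-ρ, ρ]^{m×d}` with an entry strictly inside `(-ρ, ρ)` is a convex
combination of the two matrices obtained by pushing that entry to `±ρ`. Applying the
quasi-convexity bound (H3) once per such entry bounds `L(x, ξ)` by `(1 + 3C)^{md}` times
`1 + ∑ L(x, v)`, the sum running over the `2^{md}` vertices `v` of the cube, and each
`L(·, v)` is integrable on `Ω` by (H1).
-/

open Filter Set Topology MeasureTheory

/-- Matrices are measurably a function space. -/
instance matrixMeasurableSpace {m d : ℕ} : MeasurableSpace (Matrix (Fin m) (Fin d) ℝ) :=
  inferInstanceAs (MeasurableSpace ((Fin m) → (Fin d) → ℝ))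

/-- The closed cube `Q̄_ρ(0)` of matrices with all entries in `[−ρ, ρ]`. -/
def matCube (m d : ℕ) (ρ : ℝ) : Set (Matrix (Fin m) (Fin d) ℝ) :=
  {ξ | ∀ i j, |ξ i j| ≤ ρ}

open scoped ENNReal

theorem exists_mem_Ioo_mul_add_mul_eq {ρ a : ℝ} (ha : a ∈ Ioo (-ρ) ρ) :
    ∃ t ∈ Ioo (0 : ℝ) 1, t * ρ + (1 - t) * -ρ = a := by
  rw [← openSegment_eq_Ioo (ha.1.trans ha.2)] at ha
  obtain ⟨s, t, hs, ht, hst, rfl⟩ := ha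
  refine ⟨t, ⟨ht, by linarith⟩, ?_⟩
  rw [← hst, smul_eq_mul, smul_eq_mul]
  ring

section MatrixCube

variable {ι κ : Type*} {ρ : ℝ}

def cubeVertex (ρ : ℝ) (s : ι → κ → Bool) : Matrix ι κ ℝ :=
  Matrix.of fun i j => if s i j then ρ else -ρ

theorem abs_cubeVertex_le (hρ : 0 ≤ ρ) (s : ι → κ → Bool) (i : ι) (j : κ) :
    |cubeVertex ρ s i j| ≤ ρ := by
  simp only [cubeVertex, Matrix.of_apply]
  split <;> simp [abs_of_nonneg hρ]

section UpdateEntry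

variable [DecidableEq ι] [DecidableEq κ]

def updateEntry (ξ : Matrix ι κ ℝ) (p : ι × κ) (v : ℝ) : Matrix ι κ ℝ :=
  Matrix.of fun i j => if (i, j) = p then v else ξ i j

theorem updateEntry_apply (ξ : Matrix ι κ ℝ) (p : ι × κ) (v : ℝ) (i : ι) (j : κ) :
    updateEntry ξ p v i j = if (i, j) = p then v else ξ i j :=
  rfl

theorem updateEntry_self (ξ : Matrix ι κ ℝ) (p : ι × κ) :
    updateEntry ξ p (ξ p.1 p.2) = ξ := by
  ext i j
  rw [updateEntry_apply]
  split_ifs with h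
  · subst h; rfl
  · rfl

theorem smul_updateEntry_add_smul_updateEntry (ξ : Matrix ι κ ℝ) (p : ι × κ) (t v w : ℝ) :
    t • updateEntry ξ p v + (1 - t) • updateEntry ξ p w =
      updateEntry ξ p (t * v + (1 - t) * w) := by
  ext i j
  simp only [Matrix.add_apply, Matrix.smul_apply, updateEntry_apply, smul_eq_mul]
  split_ifs <;> ring

theorem abs_updateEntry_le {ξ : Matrix ι κ ℝ} (hξ : ∀ i j, |ξ i j| ≤ ρ) (p : ι × κ)
    {v : ℝ} (hv : |v| ≤ ρ) (i : ι) (j : κ) : |updateEntry ξ p v i j| ≤ ρ := by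
  rw [updateEntry_apply]
  split_ifs
  exacts [hv, hξ i j]

end UpdateEntry

variable [Fintype ι] [Fintype κ]

open Classical in
noncomputable def nonextremeEntries (ρ : ℝ) (ξ : Matrix ι κ ℝ) : Finset (ι × κ) :=
  Finset.univ.filter fun p => ξ p.1 p.2 ≠ ρ ∧ ξ p.1 p.2 ≠ -ρ

theorem eq_cubeVertex_of_nonextremeEntries_eq_empty {ξ : Matrix ι κ ℝ}
    (h : nonextremeEntries ρ ξ = ∅) : ξ = cubeVertex ρ fun i j => decide (ξ i j = ρ) := by
  ext i j
  have hext : ξ i j = ρ ∨ ξ i j = -ρ := by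
    by_contra! hne
    simpa [nonextremeEntries, hne] using Finset.eq_empty_iff_forall_notMem.1 h (i, j)
  by_cases hij : ξ i j = ρ
  · simp [cubeVertex, hij]
  · simp [cubeVertex, hext.resolve_left hij]

theorem mem_Ioo_of_mem_nonextremeEntries {ξ : Matrix ι κ ℝ} (hξ : ∀ i j, |ξ i j| ≤ ρ)
    {p : ι × κ} (hp : p ∈ nonextremeEntries ρ ξ) : ξ p.1 p.2 ∈ Ioo (-ρ) ρ := by
  simp only [nonextremeEntries, Finset.mem_filter, Finset.mem_univ, true_and] at hp
  obtain ⟨hlower, hupper⟩ := abs_le.1 (hξ p.1 p.2)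
  exact ⟨lt_of_le_of_ne hlower (Ne.symm hp.2), lt_of_le_of_ne hupper hp.1⟩

theorem nonextremeEntries_updateEntry_subset [DecidableEq ι] [DecidableEq κ]
    (ξ : Matrix ι κ ℝ) (p : ι × κ) {v : ℝ} (hv : v = ρ ∨ v = -ρ) :
    nonextremeEntries ρ (updateEntry ξ p v) ⊆ (nonextremeEntries ρ ξ).erase p := by
  intro q hq
  simp only [nonextremeEntries, Finset.mem_filter, Finset.mem_univ, true_and,
    Finset.mem_erase] at hq ⊢
  simp only [updateEntry_apply, Prod.mk.eta] at hq
  split_ifs at hq with hqp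
  · exact absurd hv (not_or.2 hq)
  · exact ⟨hqp, hq⟩

theorem le_pow_card_nonextremeEntries_mul [DecidableEq ι] [DecidableEq κ]
    {f : Matrix ι κ ℝ → ℝ≥0∞} {c : ℝ≥0∞}
    (hf : ∀ ξ ζ : Matrix ι κ ℝ, ∀ t ∈ Ioo (0 : ℝ) 1,
      f (t • ξ + (1 - t) • ζ) ≤ c * (1 + f ξ + f ζ))
    (n : ℕ) {ξ : Matrix ι κ ℝ} (hξ : ∀ i j, |ξ i j| ≤ ρ)
    (hn : (nonextremeEntries ρ ξ).card ≤ n) :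
    f ξ ≤ (1 + 3 * c) ^ n * (1 + ∑ s, f (cubeVertex ρ s)) := by
  set B := 1 + ∑ s, f (cubeVertex ρ s)
  have hvertex (ξ : Matrix ι κ ℝ) (h : nonextremeEntries ρ ξ = ∅) : f ξ ≤ B := by
    rw [eq_cubeVertex_of_nonextremeEntries_eq_empty h]
    exact (Finset.single_le_sum (f := fun s => f (cubeVertex ρ s)) (fun _ _ => zero_le)
      (Finset.mem_univ _)).trans le_add_self
  induction n generalizing ξ with
  | zero => simpa using hvertex ξ (Finset.card_eq_zero.1 (Nat.le_zero.1 hn))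
  | succ n ih =>
    obtain hempty | ⟨p, hp⟩ := (nonextremeEntries ρ ξ).eq_empty_or_nonempty
    · exact (hvertex ξ hempty).trans (le_mul_of_one_le_left' (one_le_pow₀ le_self_add))
    have hpρ := mem_Ioo_of_mem_nonextremeEntries hξ hp
    obtain ⟨t, ht, hξp⟩ := exists_mem_Ioo_mul_add_mul_eq hpρ
    have hρ : 0 ≤ ρ := by linarith [hpρ.1, hpρ.2]
    have hupdate (v : ℝ) (hv : v = ρ ∨ v = -ρ) :
        f (updateEntry ξ p v) ≤ (1 + 3 * c) ^ n * B := by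
      refine ih (abs_updateEntry_le hξ p ?_) ?_
      · rcases hv with rfl | rfl <;> simp [abs_of_nonneg hρ]
      · calc (nonextremeEntries ρ (updateEntry ξ p v)).card
            ≤ ((nonextremeEntries ρ ξ).erase p).card :=
              Finset.card_le_card (nonextremeEntries_updateEntry_subset ξ p hv)
          _ = (nonextremeEntries ρ ξ).card - 1 := Finset.card_erase_of_mem hp
          _ ≤ n := by omega
    have hB : 1 ≤ (1 + 3 * c) ^ n * B := one_le_mul (one_le_pow₀ le_self_add) le_self_add
    calc f ξ = f (t • updateEntry ξ p ρ + (1 - t) • updateEntry ξ p (-ρ)) := by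
          rw [smul_updateEntry_add_smul_updateEntry, hξp, updateEntry_self]
      _ ≤ c * (1 + f (updateEntry ξ p ρ) + f (updateEntry ξ p (-ρ))) := hf _ _ t ht
      _ ≤ c * ((1 + 3 * c) ^ n * B + (1 + 3 * c) ^ n * B + (1 + 3 * c) ^ n * B) := by
          gcongr
          exacts [hupdate _ (Or.inl rfl), hupdate _ (Or.inr rfl)]
      _ = 3 * c * ((1 + 3 * c) ^ n * B) := by ring
      _ ≤ (1 + 3 * c) * ((1 + 3 * c) ^ n * B) := by gcongr; exact le_add_self
      _ = (1 + 3 * c) ^ (n + 1) * B := by ring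

theorem le_pow_card_mul_one_add_sum_cubeVertex [DecidableEq ι] [DecidableEq κ]
    {f : Matrix ι κ ℝ → ℝ≥0∞} {c : ℝ≥0∞}
    (hf : ∀ ξ ζ : Matrix ι κ ℝ, ∀ t ∈ Ioo (0 : ℝ) 1,
      f (t • ξ + (1 - t) • ζ) ≤ c * (1 + f ξ + f ζ))
    {ξ : Matrix ι κ ℝ} (hξ : ∀ i j, |ξ i j| ≤ ρ) :
    f ξ ≤ (1 + 3 * c) ^ (Fintype.card ι * Fintype.card κ) *
      (1 + ∑ s, f (cubeVertex ρ s)) :=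
  le_pow_card_nonextremeEntries_mul hf _ hξ <|
    (Finset.card_le_univ _).trans_eq (Fintype.card_prod ι κ)

end MatrixCube

theorem lintegral_const_mul_one_add_sum_lt_top {α β : Type*} [MeasurableSpace α]
    {μ : Measure α} [IsFiniteMeasure μ] [Fintype β] {g : β → α → ℝ≥0∞}
    (hg : ∀ s, Measurable (g s)) (hg_fin : ∀ s, ∫⁻ x, g s x ∂μ < ⊤) {c : ℝ≥0∞}
    (hc : c ≠ ⊤) :
    ∫⁻ x, c * (1 + ∑ s, g s x) ∂μ < ⊤ := by
  rw [lintegral_const_mul' _ _ hc, lintegral_add_left measurable_const,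
    lintegral_finsetSum _ fun s _ => hg s, lintegral_const]
  exact ENNReal.mul_lt_top hc.lt_top <| ENNReal.add_lt_top.2
    ⟨ENNReal.mul_lt_top ENNReal.one_lt_top (measure_lt_top μ univ),
      ENNReal.sum_lt_top.2 fun s _ => hg_fin s⟩

theorem stmt6_general {d m : ℕ} (Ω : Set (Fin d → ℝ))
    (hΩopen : IsOpen Ω) (hΩbd : Bornology.IsBounded Ω)
    (L : (Fin d → ℝ) → Matrix (Fin m) (Fin d) ℝ → ENNReal)
    (hmeas : Measurable (Function.uncurry L))
    (ρ₀ : ℝ) (hρ₀ : 0 < ρ₀)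
    (h1 : ∀ ξ ∈ matCube m d ρ₀, ∫⁻ x in Ω, L x ξ < ⊤)
    (C : ℝ)
    (h3 : ∀ x ∈ Ω, ∀ ξ ζ : Matrix (Fin m) (Fin d) ℝ, ∀ t ∈ Set.Ioo (0 : ℝ) 1,
      L x (t • ξ + (1 - t) • ζ) ≤ ENNReal.ofReal C * (1 + L x ξ + L x ζ)) :
    ∫⁻ x in Ω, (⨆ ζ ∈ matCube m d ρ₀, L x ζ) < ⊤ := by
  set D : ℝ≥0∞ := (1 + 3 * ENNReal.ofReal C) ^ (m * d)
  have hbound : ∀ x ∈ Ω,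
      ⨆ ζ ∈ matCube m d ρ₀, L x ζ ≤ D * (1 + ∑ s, L x (cubeVertex ρ₀ s)) :=
    fun x hx => iSup₂_le fun ζ hζ => by
      simpa using le_pow_card_mul_one_add_sum_cubeVertex (h3 x hx) hζ
  have : IsFiniteMeasure (volume.restrict Ω) := isFiniteMeasure_restrict.2 hΩbd.measure_lt_top.ne
  calc ∫⁻ x in Ω, (⨆ ζ ∈ matCube m d ρ₀, L x ζ)
      ≤ ∫⁻ x in Ω, D * (1 + ∑ s, L x (cubeVertex ρ₀ s)) :=
        setLIntegral_mono' hΩopen.measurableSet hbound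
    _ < ⊤ := lintegral_const_mul_one_add_sum_lt_top (fun s => hmeas.of_uncurry_right)
        (fun s => h1 _ (abs_cubeVertex_le hρ₀.le s)) (by finiteness)

/-- If `L` is Borel measurable, satisfies (H1) (finiteness of `∫_Ω L(·,ξ)` for every `ξ`
with entries in `[−ρ₀,ρ₀]`) and (H3), then `∫_Ω sup_{ζ ∈ Q̄_{ρ₀}(0)} L(x,ζ) dx < ∞`. -/
theorem stmt6 {d m : ℕ} (Ω : Set (Fin d → ℝ))
    (hΩopen : IsOpen Ω) (hΩne : Ω.Nonempty) (hΩbd : Bornology.IsBounded Ω)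
    (L : (Fin d → ℝ) → Matrix (Fin m) (Fin d) ℝ → ENNReal)
    (hmeas : Measurable (Function.uncurry L))
    (ρ₀ : ℝ) (hρ₀ : 0 < ρ₀)
    (h1 : ∀ ξ ∈ matCube m d ρ₀, ∫⁻ x in Ω, L x ξ < ⊤)
    (C : ℝ) (hC : 0 < C)
    (h3 : ∀ x ∈ Ω, ∀ ξ ζ : Matrix (Fin m) (Fin d) ℝ, ∀ t ∈ Set.Ioo (0 : ℝ) 1,
      L x (t • ξ + (1 - t) • ζ) ≤ ENNReal.ofReal C * (1 + L x ξ + L x ζ)) :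
    ∫⁻ x in Ω, (⨆ ζ ∈ matCube m d ρ₀, L x ζ) < ⊤ :=
  stmt6_general Ω hΩopen hΩbd L hmeas ρ₀ hρ₀ h1 C h3
end

section
/- Let m be a nonnegative set function defined on all open cubes of ℝ^d with m(∅)=0, and define m^♯(E) := sup_{δ>0} inf{ Σ_i m(Q_i) : {Q_i}_{i∈I} a countable family of open cubes of diameter < δ with pairwise disjoint closures, each meeting E, whose union covers E up to Lebesgue measure zero } (and m^♯(∅)=0). If E₁, E₂ ⊆ ℝ^d satisfy dist(E₁,E₂) > 0, then m^♯(E₁ ∪ E₂) = m^♯(E₁) + m^♯(E₂). -/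
open Filter Set Topology MeasureTheory

/-- `Q` is an open axis-parallel cube of `ℝ^d` (with positive side length). -/
def IsOpenCube {d : ℕ} (Q : Set (Fin d → ℝ)) : Prop :=
  ∃ (c : Fin d → ℝ) (r : ℝ), 0 < r ∧ Q = {y | ∀ i, y i ∈ Set.Ioo (c i) (c i + r)}

/-- `𝒬 ∈ F_δ(E)`: a countable family of open cubes of diameter `< δ` with pairwise
disjoint closures, each meeting `E`, covering `E` up to Lebesgue measure zero. -/
def CubeFam {d : ℕ} (E : Set (Fin d → ℝ)) (δ : ℝ)
    (𝒬 : Set (Set (Fin d → ℝ))) : Prop :=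
  𝒬.Countable ∧
  (∀ Q ∈ 𝒬, IsOpenCube Q ∧ Metric.diam Q < δ ∧ (Q ∩ E).Nonempty) ∧
  𝒬.Pairwise (fun Q Q' => Disjoint (closure Q) (closure Q')) ∧
  volume (E \ ⋃₀ 𝒬) = 0

/-- The Carathéodory-type construction
`m^♯(E) := sup_{δ>0} inf { Σ_i m(Q_i) : {Q_i} ∈ F_δ(E) }` (and `m^♯(∅) = 0`, which holds
automatically since the empty family belongs to `F_δ(∅)`). -/
noncomputable def msharp {d : ℕ} (m : Set (Fin d → ℝ) → ENNReal)
    (E : Set (Fin d → ℝ)) : ENNReal :=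
  ⨆ (δ : ℝ) (_ : 0 < δ), ⨅ (𝒬 : Set (Set (Fin d → ℝ))) (_ : CubeFam E δ 𝒬),
    ∑' Q : 𝒬, m Q

/-!
At every scale `δ ≤ ε / 2`, where `ε` separates `E₁` from `E₂`, no cube of diameter `< δ` meets
both sets and the closures of two cubes meeting different sets are disjoint. Hence the admissible
families for `E₁ ∪ E₂` are exactly the unions of admissible families for `E₁` and for `E₂`, and
the inner infimum is additive at these scales. Since it is antitone in `δ`, `m^♯` is its limit as
`δ → 0⁺`, so additivity passes to the limit.
-/

noncomputable def msharpAt {d : ℕ} (m : Set (Fin d → ℝ) → ENNReal)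
    (E : Set (Fin d → ℝ)) (δ : ℝ) : ENNReal :=
  ⨅ (𝒬 : Set (Set (Fin d → ℝ))) (_ : CubeFam E δ 𝒬), ∑' Q : 𝒬, m Q

variable {d : ℕ}

lemma IsOpenCube.isBounded {Q : Set (Fin d → ℝ)} (h : IsOpenCube Q) :
    Bornology.IsBounded Q := by
  obtain ⟨c, r, -, rfl⟩ := h
  refine (Metric.isBounded_Icc c (c + fun _ => r)).subset fun y hy => ⟨fun i => ?_, fun i => ?_⟩
  · exact (hy i).1.le
  · exact (hy i).2.le

lemma IsOpenCube.dist_lt_of_mem_closure {Q : Set (Fin d → ℝ)} (hQ : IsOpenCube Q) {δ : ℝ}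
    (hdiam : Metric.diam Q < δ) {x y : Fin d → ℝ} (hx : x ∈ closure Q) (hy : y ∈ closure Q) :
    dist x y < δ := by
  have h := Metric.dist_le_diam_of_mem hQ.isBounded.closure hx hy
  rw [Metric.diam_closure] at h
  exact h.trans_lt hdiam

namespace CubeFam

variable {E E₁ E₂ : Set (Fin d → ℝ)} {δ : ℝ} {𝒬 𝒬₁ 𝒬₂ : Set (Set (Fin d → ℝ))}

lemma mono {δ' : ℝ} (h : CubeFam E δ 𝒬) (hδ : δ ≤ δ') : CubeFam E δ' 𝒬 :=
  ⟨h.1, fun Q hQ => ⟨(h.2.1 Q hQ).1, (h.2.1 Q hQ).2.1.trans_le hδ, (h.2.1 Q hQ).2.2⟩,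
    h.2.2.1, h.2.2.2⟩

lemma restrict {E' : Set (Fin d → ℝ)} (h : CubeFam E δ 𝒬) (hE : E' ⊆ E) :
    CubeFam E' δ {Q ∈ 𝒬 | (Q ∩ E').Nonempty} := by
  refine ⟨h.1.mono (sep_subset _ _), fun Q hQ => ⟨(h.2.1 Q hQ.1).1, (h.2.1 Q hQ.1).2.1, hQ.2⟩,
    h.2.2.1.mono (sep_subset _ _), measure_mono_null ?_ h.2.2.2⟩
  rintro x ⟨hxE', hx⟩
  exact ⟨hE hxE', fun ⟨Q, hQ, hxQ⟩ => hx ⟨Q, ⟨hQ, x, hxQ, hxE'⟩, hxQ⟩⟩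

lemma disjoint_closure_of_separated (h₁ : CubeFam E₁ δ 𝒬₁) (h₂ : CubeFam E₂ δ 𝒬₂)
    (hsep : ∀ x ∈ E₁, ∀ y ∈ E₂, 2 * δ ≤ dist x y) :
    ∀ Q ∈ 𝒬₁, ∀ Q' ∈ 𝒬₂, Disjoint (closure Q) (closure Q') := by
  intro Q hQ Q' hQ'
  obtain ⟨hcube, hdiam, x, hxQ, hxE⟩ := h₁.2.1 Q hQ
  obtain ⟨hcube', hdiam', y, hyQ, hyE⟩ := h₂.2.1 Q' hQ'
  refine disjoint_left.2 fun z hz hz' => ?_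
  have hxz := hcube.dist_lt_of_mem_closure hdiam (subset_closure hxQ) hz
  have hzy := hcube'.dist_lt_of_mem_closure hdiam' hz' (subset_closure hyQ)
  linarith [hsep x hxE y hyE, dist_triangle x z y]

lemma disjoint_of_separated (h₁ : CubeFam E₁ δ 𝒬₁) (h₂ : CubeFam E₂ δ 𝒬₂)
    (hsep : ∀ x ∈ E₁, ∀ y ∈ E₂, 2 * δ ≤ dist x y) : Disjoint 𝒬₁ 𝒬₂ := by
  refine disjoint_left.2 fun Q hQ₁ hQ₂ => ?_
  obtain ⟨x, hxQ, -⟩ := (h₁.2.1 Q hQ₁).2.2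
  exact disjoint_left.1 (h₁.disjoint_closure_of_separated h₂ hsep Q hQ₁ Q hQ₂)
    (subset_closure hxQ) (subset_closure hxQ)

lemma union_of_separated (h₁ : CubeFam E₁ δ 𝒬₁) (h₂ : CubeFam E₂ δ 𝒬₂)
    (hsep : ∀ x ∈ E₁, ∀ y ∈ E₂, 2 * δ ≤ dist x y) :
    CubeFam (E₁ ∪ E₂) δ (𝒬₁ ∪ 𝒬₂) := by
  have hcross := h₁.disjoint_closure_of_separated h₂ hsep
  refine ⟨h₁.1.union h₂.1, ?_, ?_, ?_⟩
  · rintro Q (hQ | hQ)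
    · obtain ⟨hcube, hdiam, hmeet⟩ := h₁.2.1 Q hQ
      exact ⟨hcube, hdiam, hmeet.mono (inter_subset_inter_right _ subset_union_left)⟩
    · obtain ⟨hcube, hdiam, hmeet⟩ := h₂.2.1 Q hQ
      exact ⟨hcube, hdiam, hmeet.mono (inter_subset_inter_right _ subset_union_right)⟩
  · exact pairwise_union.2 ⟨h₁.2.2.1, h₂.2.2.1, fun Q hQ Q' hQ' _ =>
      ⟨hcross Q hQ Q' hQ', (hcross Q hQ Q' hQ').symm⟩⟩
  · refine measure_mono_null ?_ (measure_union_null h₁.2.2.2 h₂.2.2.2)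
    rintro x ⟨hx | hx, hxU⟩
    · exact Or.inl ⟨hx, fun hx₁ => hxU (sUnion_mono subset_union_left hx₁)⟩
    · exact Or.inr ⟨hx, fun hx₂ => hxU (sUnion_mono subset_union_right hx₂)⟩

end CubeFam

variable (m : Set (Fin d → ℝ) → ENNReal)

lemma antitone_msharpAt (E : Set (Fin d → ℝ)) : Antitone (msharpAt m E) :=
  fun _ _ hδ => le_iInf₂ fun 𝒬 h𝒬 => iInf₂_le 𝒬 (h𝒬.mono hδ)

lemma tendsto_msharpAt (E : Set (Fin d → ℝ)) :
    Tendsto (msharpAt m E) (𝓝[>] 0) (𝓝 (msharp m E)) := by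
  have h := (antitone_msharpAt m E).tendsto_nhdsGT 0
  simp only [sSup_image, mem_Ioi] at h
  exact h

lemma msharpAt_union_of_separated {E₁ E₂ : Set (Fin d → ℝ)} {δ : ℝ}
    (hsep : ∀ x ∈ E₁, ∀ y ∈ E₂, 2 * δ ≤ dist x y) :
    msharpAt m (E₁ ∪ E₂) δ = msharpAt m E₁ δ + msharpAt m E₂ δ := by
  apply le_antisymm
  · refine ENNReal.le_iInf_add_iInf fun 𝒬₁ 𝒬₂ => ENNReal.le_iInf_add_iInf fun h₁ h₂ => ?_
    calc msharpAt m (E₁ ∪ E₂) δ ≤ ∑' Q : ↥(𝒬₁ ∪ 𝒬₂), m Q :=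
          iInf₂_le _ (h₁.union_of_separated h₂ hsep)
      _ ≤ (∑' Q : 𝒬₁, m Q) + ∑' Q : 𝒬₂, m Q := ENNReal.tsum_union_le m 𝒬₁ 𝒬₂
  · refine le_iInf₂ fun 𝒬 h𝒬 => ?_
    have h₁ := h𝒬.restrict (subset_union_left (t := E₂))
    have h₂ := h𝒬.restrict (subset_union_right (s := E₁))
    calc msharpAt m E₁ δ + msharpAt m E₂ δ
        ≤ (∑' Q : ↑{Q ∈ 𝒬 | (Q ∩ E₁).Nonempty}, m Q) +
            ∑' Q : ↑{Q ∈ 𝒬 | (Q ∩ E₂).Nonempty}, m Q :=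
          add_le_add (iInf₂_le _ h₁) (iInf₂_le _ h₂)
      _ = ∑' Q : ↥({Q ∈ 𝒬 | (Q ∩ E₁).Nonempty} ∪ {Q ∈ 𝒬 | (Q ∩ E₂).Nonempty}), m Q :=
          (ENNReal.summable.tsum_union_disjoint (h₁.disjoint_of_separated h₂ hsep)
            ENNReal.summable).symm
      _ ≤ ∑' Q : 𝒬, m Q :=
          ENNReal.tsum_mono_subtype m (union_subset (sep_subset _ _) (sep_subset _ _))

theorem stmt14_general {d : ℕ} (m : Set (Fin d → ℝ) → ENNReal)
    (E₁ E₂ : Set (Fin d → ℝ))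
    (hdist : ∃ ε : ℝ, 0 < ε ∧ ∀ x ∈ E₁, ∀ y ∈ E₂, ε ≤ dist x y) :
    msharp m (E₁ ∪ E₂) = msharp m E₁ + msharp m E₂ := by
  obtain ⟨ε, hε, hsep⟩ := hdist
  have hsmall : msharpAt m (E₁ ∪ E₂) =ᶠ[𝓝[>] 0] msharpAt m E₁ + msharpAt m E₂ := by
    filter_upwards [Ioo_mem_nhdsGT (half_pos hε)] with δ hδ
    exact msharpAt_union_of_separated m fun x hx y hy => by
      linarith [hsep x hx y hy, hδ.2]
  exact tendsto_nhds_unique ((tendsto_msharpAt m _).congr' hsmall)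
    ((tendsto_msharpAt m E₁).add (tendsto_msharpAt m E₂))

/-- (Lemma 7.2 (i).) If `dist(E₁, E₂) > 0` then `m^♯(E₁ ∪ E₂) = m^♯(E₁) + m^♯(E₂)`. -/
theorem stmt14 {d : ℕ} (m : Set (Fin d → ℝ) → ENNReal) (hm0 : m ∅ = 0)
    (E₁ E₂ : Set (Fin d → ℝ))
    (hdist : ∃ ε : ℝ, 0 < ε ∧ ∀ x ∈ E₁, ∀ y ∈ E₂, ε ≤ dist x y) :
    msharp m (E₁ ∪ E₂) = msharp m E₁ + msharp m E₂ :=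
  stmt14_general m E₁ E₂ hdist
end

section
/- Let m be a nonnegative set function on open cubes of ℝ^d with m(∅)=0, and m^♯ the associated Carathéodory-type construction (as in the additivity lemma). If E ⊆ V ⊆ ℝ^d with V a nonempty open set, then m^♯(E) ≤ m^♯(V). -/
open Filter Set Topology MeasureTheory

/-- A point of `E` missed by the selected cubes is a point of `V` missed by all of `𝒬`. -/
theorem CubeFam.sep_inter_nonempty {d : ℕ} {E V : Set (Fin d → ℝ)} {δ : ℝ}
    {𝒬 : Set (Set (Fin d → ℝ))} (h𝒬 : CubeFam V δ 𝒬) (hEV : E ⊆ V) :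
    CubeFam E δ {Q ∈ 𝒬 | (Q ∩ E).Nonempty} := by
  obtain ⟨hcount, hcubes, hdisj, hnull⟩ := h𝒬
  have hsub : {Q ∈ 𝒬 | (Q ∩ E).Nonempty} ⊆ 𝒬 := sep_subset _ _
  refine ⟨hcount.mono hsub, fun Q hQ => ?_, hdisj.mono hsub, measure_mono_null ?_ hnull⟩
  · exact ⟨(hcubes Q hQ.1).1, (hcubes Q hQ.1).2.1, hQ.2⟩
  · rintro x ⟨hxE, hxn⟩
    exact ⟨hEV hxE, fun ⟨Q, hQ, hxQ⟩ => hxn ⟨Q, ⟨hQ, x, hxQ, hxE⟩, hxQ⟩⟩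

theorem msharp_mono {d : ℕ} (m : Set (Fin d → ℝ) → ENNReal) {E V : Set (Fin d → ℝ)}
    (hEV : E ⊆ V) : msharp m E ≤ msharp m V := by
  refine iSup₂_mono fun δ _ => le_iInf₂ fun 𝒬 h𝒬 => ?_
  exact iInf₂_le_of_le _ (h𝒬.sep_inter_nonempty hEV)
    (ENNReal.tsum_mono_subtype (fun Q => m Q) (sep_subset _ _))

theorem stmt15_general {d : ℕ} (m : Set (Fin d → ℝ) → ENNReal)
    (E V : Set (Fin d → ℝ)) (hEV : E ⊆ V) :
    msharp m E ≤ msharp m V :=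
  msharp_mono m hEV

/-- (Lemma 7.2 (ii).) If `E ⊆ V` with `V` a nonempty open set, then `m^♯(E) ≤ m^♯(V)`. -/
theorem stmt15 {d : ℕ} (m : Set (Fin d → ℝ) → ENNReal) (hm0 : m ∅ = 0)
    (E V : Set (Fin d → ℝ)) (hV : IsOpen V) (hVne : V.Nonempty) (hEV : E ⊆ V) :
    msharp m E ≤ msharp m V :=
  stmt15_general m E V hEV
end

section
/- Let Ω ⊆ ℝ^d be bounded open, m a nonnegative set function on open cubes with m(∅)=0, and ω := limsup_{δ→0} sup{ m(Q)/|Q| : Q ⊆ Ω an open cube with diam(Q) < δ }. If ω < ∞, then for every closed set E ⊆ Ω, m^♯(E) ≤ ω|E|. -/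
open Filter Set Topology MeasureTheory Metric
open scoped ENNReal NNReal

/-- `ω := limsup_{δ→0⁺} sup { m(Q)/|Q| : Q ⊆ Ω an open cube with diam(Q) < δ }`. -/
noncomputable def cubeOmega {d : ℕ} (m : Set (Fin d → ℝ) → ENNReal)
    (Ω : Set (Fin d → ℝ)) : ENNReal :=
  Filter.limsup
    (fun δ : ℝ => ⨆ Q ∈ {Q | IsOpenCube Q ∧ Q ⊆ Ω ∧ Metric.diam Q < δ}, m Q / volume Q)
    (nhdsWithin 0 (Set.Ioi 0))

lemma isOpenCube_ball {d : ℕ} (x : Fin d → ℝ) {r : ℝ} (hr : 0 < r) :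
    IsOpenCube (Metric.ball x r) := by
  refine ⟨fun i => x i - r, 2 * r, by linarith, ?_⟩
  ext y
  simp only [Metric.mem_ball, mem_setOf_eq, dist_pi_lt_iff hr, Real.dist_eq, abs_lt, mem_Ioo]
  constructor
  · intro h i; constructor <;> linarith [(h i).1, (h i).2]
  · intro h i; constructor <;> linarith [(h i).1, (h i).2]

lemma vol_ball_eq {d : ℕ} (x : Fin d → ℝ) {r : ℝ} (hr : 0 < r) :
    volume (Metric.ball x r) = volume (Metric.closedBall x r) := by
  rw [volume_pi_ball _ hr, volume_pi_closedBall _ hr.le]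
  simp [Real.volume_ball, Real.volume_closedBall]


/-- (Lemma 7.2 (iii).) If `ω < ∞` then `m^♯(E) ≤ ω |E|` for every closed `E ⊆ Ω`. -/
theorem stmt16 {d : ℕ} (Ω : Set (Fin d → ℝ))
    (hΩopen : IsOpen Ω) (hΩbd : Bornology.IsBounded Ω)
    (m : Set (Fin d → ℝ) → ENNReal) (hm0 : m ∅ = 0)
    (hω : cubeOmega m Ω < ⊤) :
    ∀ E : Set (Fin d → ℝ), IsClosed E → E ⊆ Ω →
      msharp m E ≤ cubeOmega m Ω * volume E := by
  intro E hEcl hEΩ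
  set ω := cubeOmega m Ω with hωdef
  set g : ℝ → ℝ≥0∞ :=
    fun δ' => ⨆ Q ∈ {Q | IsOpenCube Q ∧ Q ⊆ Ω ∧ Metric.diam Q < δ'}, m Q / volume Q with hg
  have hEcomp : IsCompact E :=
    Metric.isCompact_of_isClosed_isBounded hEcl (hΩbd.subset hEΩ)
  have hvE : volume E ≠ ⊤ := hEcomp.measure_lt_top.ne
  obtain ⟨η0, hη0, hthick⟩ := hEcomp.exists_thickening_subset_open hΩopen hEΩ
  rw [msharp]
  refine iSup₂_le fun δ hδ => ?_
  set X := ⨅ (𝒬 : Set (Set (Fin d → ℝ))) (_ : CubeFam E δ 𝒬), ∑' Q : 𝒬, m Q with hX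
  have key : ∀ ε : ℝ≥0∞, 0 < ε → ε ≠ ⊤ → X ≤ (ω + ε) * (volume E + ε) := by
    intro ε hε hεt
    set c := ω + ε with hc
    have hωc : ω < c := ENNReal.lt_add_right hω.ne hε.ne'
    have hev1 : ∀ᶠ δ' in 𝓝[>] (0:ℝ), g δ' < c :=
      Filter.eventually_lt_of_limsup_lt (show Filter.limsup g (𝓝[>] (0:ℝ)) < c from hωc)
    have hev2 : ∀ᶠ η in 𝓝[>] (0:ℝ), volume (Metric.cthickening η E) < volume E + ε := by
      have h := tendsto_measure_cthickening_of_isCompact (μ := volume) hEcomp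
      have hlt : volume E < volume E + ε := ENNReal.lt_add_right hvE hε.ne'
      exact ((h.eventually (Filter.Tendsto.eventually_lt_const hlt tendsto_id)).filter_mono
        nhdsWithin_le_nhds)
    have hev3 : ∀ᶠ ρ in 𝓝[>] (0:ℝ), ρ < min δ η0 :=
      (Filter.Tendsto.eventually_lt_const (lt_min hδ hη0)
        (tendsto_id.mono_left nhdsWithin_le_nhds))
    obtain ⟨ρ, ⟨⟨hgρ, hηρ⟩, hρsm⟩, hρpos⟩ :=
      (((hev1.and hev2).and hev3).and self_mem_nhdsWithin).exists
    have hρpos : (0:ℝ) < ρ := hρpos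
    have hρδ : ρ < δ := lt_of_lt_of_le hρsm (min_le_left _ _)
    have hρη0 : ρ < η0 := lt_of_lt_of_le hρsm (min_le_right _ _)
    -- Besicovitch covering
    obtain ⟨t, r, t_count, ts, hr, hcov, hdisj⟩ :=
      Besicovitch.exists_disjoint_closedBall_covering_ae (μ := volume)
        (fun _ => Ioo 0 (ρ/2)) E
        (fun x hx δ' hδ' => ⟨min (ρ/2) δ' / 2,
          ⟨⟨by positivity, by
            have : min (ρ/2) δ' / 2 < min (ρ/2) δ' := by
              have : (0:ℝ) < min (ρ/2) δ' := lt_min (by linarith) hδ'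
              linarith
            exact lt_of_lt_of_le this (min_le_left _ _)⟩,
           ⟨by positivity, by
            have h1 : (0:ℝ) < min (ρ/2) δ' := lt_min (by linarith) hδ'
            have : min (ρ/2) δ' / 2 < min (ρ/2) δ' := by linarith
            exact lt_of_lt_of_le this (min_le_right _ _)⟩⟩⟩)
        (fun _ => 1) (fun _ _ => one_pos)
    have hrx : ∀ x ∈ t, 0 < r x ∧ r x < ρ/2 := fun x hx => ⟨(hr x hx).1.1, (hr x hx).1.2⟩
    set 𝒬 : Set (Set (Fin d → ℝ)) := (fun x => Metric.ball x (r x)) '' t with h𝒬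
    have hQsubΩ : ∀ x ∈ t, Metric.ball x (r x) ⊆ Metric.thickening ρ E := by
      intro x hx
      refine (Metric.ball_subset_thickening (ts hx) (r x)).trans
        (Metric.thickening_mono ?_ E)
      linarith [(hrx x hx).2]
    have hQcube : ∀ x ∈ t,
        Metric.ball x (r x) ∈ {Q | IsOpenCube Q ∧ Q ⊆ Ω ∧ Metric.diam Q < ρ} := by
      intro x hx
      refine ⟨isOpenCube_ball x (hrx x hx).1, ?_, ?_⟩
      · exact (hQsubΩ x hx).trans ((Metric.thickening_mono hρη0.le E).trans hthick)
      · calc Metric.diam (Metric.ball x (r x)) ≤ 2 * r x := Metric.diam_ball (hrx x hx).1.le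
          _ < ρ := by linarith [(hrx x hx).2]
    have hmQ : ∀ Q ∈ 𝒬, m Q ≤ c * volume Q := by
      rintro _ ⟨x, hx, rfl⟩
      have hvol0 : volume (Metric.ball x (r x)) ≠ 0 :=
        (measure_ball_pos _ _ (hrx x hx).1).ne'
      have hvolt : volume (Metric.ball x (r x)) ≠ ⊤ := measure_ball_lt_top.ne
      have hle : m (Metric.ball x (r x)) / volume (Metric.ball x (r x)) ≤ g ρ := by
        rw [hg]
        exact le_iSup₂ (f := fun Q (_ : Q ∈ {Q | IsOpenCube Q ∧ Q ⊆ Ω ∧ Metric.diam Q < ρ})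
          => m Q / volume Q) _ (hQcube x hx)
      exact (ENNReal.div_le_iff hvol0 hvolt).mp (hle.trans hgρ.le)
    have hfam : CubeFam E δ 𝒬 := by
      refine ⟨t_count.image _, ?_, ?_, ?_⟩
      · rintro _ ⟨x, hx, rfl⟩
        exact ⟨isOpenCube_ball x (hrx x hx).1, (hQcube x hx).2.2.trans hρδ,
          ⟨x, Metric.mem_ball_self (hrx x hx).1, ts hx⟩⟩
      · rintro _ ⟨x, hx, rfl⟩ _ ⟨y, hy, rfl⟩ hne
        have hxy : x ≠ y := by rintro rfl; exact hne rfl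
        rw [closure_ball x (hrx x hx).1.ne', closure_ball y (hrx y hy).1.ne']
        exact hdisj hx hy hxy
      · have hsU : ⋃₀ 𝒬 = ⋃ x ∈ t, Metric.ball x (r x) := by
          rw [h𝒬, sUnion_image]
        rw [hsU]
        have hnd : ∀ x ∈ t,
            volume (Metric.closedBall x (r x) \ Metric.ball x (r x)) = 0 := by
          intro x hx
          rw [measure_diff Metric.ball_subset_closedBall
            measurableSet_ball.nullMeasurableSet measure_ball_lt_top.ne,
            vol_ball_eq x (hrx x hx).1, tsub_self]
        have hsubset : E \ (⋃ x ∈ t, Metric.ball x (r x)) ⊆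
            (E \ ⋃ x ∈ t, Metric.closedBall x (r x)) ∪
            (⋃ x ∈ t, Metric.closedBall x (r x) \ Metric.ball x (r x)) := by
          intro y hy
          by_cases hyc : y ∈ ⋃ x ∈ t, Metric.closedBall x (r x)
          · right
            obtain ⟨x, hx, hyx⟩ := mem_iUnion₂.mp hyc
            have : y ∉ Metric.ball x (r x) := fun h =>
              hy.2 (mem_iUnion₂.mpr ⟨x, hx, h⟩)
            exact mem_iUnion₂.mpr ⟨x, hx, hyx, this⟩
          · exact Or.inl ⟨hy.1, hyc⟩
        refine measure_mono_null hsubset (measure_union_null hcov ?_)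
        exact (measure_biUnion_null_iff t_count).mpr hnd
    have hdisj' : 𝒬.Pairwise Disjoint := by
      refine hfam.2.2.1.mono' ?_
      intro Q Q' h
      exact h.mono subset_closure subset_closure
    have hmeas : ∀ Q ∈ 𝒬, MeasurableSet Q := by
      rintro _ ⟨x, hx, rfl⟩; exact measurableSet_ball
    calc X ≤ ∑' Q : 𝒬, m Q := iInf₂_le 𝒬 hfam
      _ ≤ ∑' Q : 𝒬, c * volume (Q : Set (Fin d → ℝ)) :=
          ENNReal.tsum_le_tsum fun Q => hmQ Q Q.2
      _ = c * ∑' Q : 𝒬, volume (Q : Set (Fin d → ℝ)) := ENNReal.tsum_mul_left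
      _ = c * volume (⋃₀ 𝒬) := by rw [measure_sUnion (t_count.image _) hdisj' hmeas]
      _ ≤ c * volume (Metric.cthickening ρ E) := by
          refine mul_le_mul_right (measure_mono ?_) c
          refine sUnion_subset ?_
          rintro _ ⟨x, hx, rfl⟩
          exact (hQsubΩ x hx).trans (Metric.thickening_subset_cthickening ρ E)
      _ ≤ c * (volume E + ε) := mul_le_mul_right hηρ.le c
  have htend : Tendsto (fun ε : ℝ≥0∞ => (ω + ε) * (volume E + ε)) (𝓝[>] 0)
      (𝓝 (ω * volume E)) := by
    have h1 : Tendsto (fun ε : ℝ≥0∞ => ω + ε) (𝓝 0) (𝓝 ω) := by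
      simpa using (tendsto_const_nhds.add tendsto_id :
        Tendsto (fun ε : ℝ≥0∞ => ω + ε) (𝓝 0) (𝓝 (ω + 0)))
    have h2 : Tendsto (fun ε : ℝ≥0∞ => volume E + ε) (𝓝 0) (𝓝 (volume E)) := by
      simpa using (tendsto_const_nhds.add tendsto_id :
        Tendsto (fun ε : ℝ≥0∞ => volume E + ε) (𝓝 0) (𝓝 (volume E + 0)))
    exact ENNReal.Tendsto.mul (h1.mono_left nhdsWithin_le_nhds) (Or.inr hvE)
      (h2.mono_left nhdsWithin_le_nhds) (Or.inr hω.ne)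
  refine ge_of_tendsto htend ?_
  filter_upwards [Ioo_mem_nhdsGT_of_mem (show (0:ℝ≥0∞) ∈ Ico 0 1 from ⟨le_refl _, zero_lt_one⟩)]
    with ε hmem
  exact key ε hmem.1 (hmem.2.trans_le le_top).ne
end

section
/- Let Ω ⊆ ℝ^d bounded open, m a nonnegative set function on open cubes. Define m⁻_*(x) := liminf_{δ→0} inf{ m(Q)/|Q| : Q an open cube with x ∈ Q, diam(Q) < δ }. Let b > 0 and E ⊆ Ω satisfy E ⊆ {x ∈ Ω : m⁻_*(x) < b}. Then m^♯(E) ≤ b|E|. -/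
open Filter Set Topology MeasureTheory

/-- `m⁻_*(x) := liminf_{δ→0⁺} inf { m(Q)/|Q| : x ∈ Q an open cube, diam(Q) < δ }`. -/
noncomputable def mMinus {d : ℕ} (m : Set (Fin d → ℝ) → ENNReal)
    (x : Fin d → ℝ) : ENNReal :=
  Filter.liminf
    (fun δ : ℝ => ⨅ Q ∈ {Q | IsOpenCube Q ∧ x ∈ Q ∧ Metric.diam Q < δ}, m Q / volume Q)
    (nhdsWithin 0 (Set.Ioi 0))

/-! At every point of `E` there are arbitrarily small open cubes `Q` with `m Q ≤ b |Q|`. For an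
open `U ⊇ E` and `δ > 0`, the Vitali covering theorem extracts from the closures of such cubes
lying in `U` a countable disjoint subfamily covering `E` up to a null set; cube boundaries are null,
so the open cubes form a family in `F_δ(E)`, and `Σ m(Q) ≤ b Σ |Q| ≤ b |U|`. Outer regularity of
Lebesgue measure turns `m^♯(E) ≤ b |U|` into `m^♯(E) ≤ b |E|`. -/

lemma Bornology.IsBounded.closure_subset_closedBall_diam {X : Type*} [PseudoMetricSpace X]
    {s : Set X} (hs : Bornology.IsBounded s) {x : X} (hx : x ∈ s) :
    closure s ⊆ Metric.closedBall x (Metric.diam s) := fun _ hy => by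
  rw [Metric.mem_closedBall, ← Metric.diam_closure]
  exact Metric.dist_le_diam_of_mem hs.closure hy (subset_closure hx)

lemma measure_diff_sUnion_eq_zero_of_closure {X : Type*} [TopologicalSpace X]
    [MeasurableSpace X] {μ : Measure X} {E : Set X} {𝒬 : Set (Set X)} (h𝒬 : 𝒬.Countable)
    (hfrontier : ∀ Q ∈ 𝒬, μ (frontier Q) = 0) (hcov : μ (E \ ⋃ Q ∈ 𝒬, closure Q) = 0) :
    μ (E \ ⋃₀ 𝒬) = 0 := by
  have hsub : E \ ⋃₀ 𝒬 ⊆ (E \ ⋃ Q ∈ 𝒬, closure Q) ∪ ⋃ Q ∈ 𝒬, frontier Q := by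
    rintro y ⟨hyE, hy⟩
    by_cases hcl : y ∈ ⋃ Q ∈ 𝒬, closure Q
    · obtain ⟨Q, hQ, hyQ⟩ := mem_iUnion₂.1 hcl
      rw [closure_eq_self_union_frontier] at hyQ
      exact Or.inr (mem_biUnion hQ (hyQ.resolve_left fun h => hy ⟨Q, hQ, h⟩))
    · exact Or.inl ⟨hyE, hcl⟩
  exact measure_mono_null hsub
    (measure_union_null hcov ((measure_biUnion_null_iff h𝒬).2 hfrontier))

section

variable {d : ℕ}

namespace IsOpenCube

variable {Q : Set (Fin d → ℝ)}

lemma exists_eq_pi (hQ : IsOpenCube Q) :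
    ∃ (c : Fin d → ℝ) (r : ℝ), 0 < r ∧ Q = univ.pi fun i => Ioo (c i) (c i + r) := by
  obtain ⟨c, r, hr, rfl⟩ := hQ
  exact ⟨c, r, hr, by ext; simp⟩

lemma isOpen (hQ : IsOpenCube Q) : IsOpen Q := by
  obtain ⟨c, r, -, rfl⟩ := hQ.exists_eq_pi
  exact isOpen_set_pi finite_univ fun i _ => isOpen_Ioo

lemma isBounded_s17 (hQ : IsOpenCube Q) : Bornology.IsBounded Q := by
  obtain ⟨c, r, -, rfl⟩ := hQ.exists_eq_pi
  exact Bornology.IsBounded.pi fun i => Metric.isBounded_Ioo _ _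

lemma volume_frontier (hQ : IsOpenCube Q) : volume (frontier Q) = 0 := by
  obtain ⟨c, r, -, rfl⟩ := hQ.exists_eq_pi
  exact (convex_pi fun i _ => convex_Ioo _ _).addHaar_frontier volume

lemma volume_ne_top (hQ : IsOpenCube Q) : volume Q ≠ ⊤ :=
  hQ.isBounded_s17.measure_lt_top.ne

lemma volume_closedBall_le (hQ : IsOpenCube Q) (x : Fin d → ℝ) :
    volume (Metric.closedBall x (3 * Metric.diam Q)) ≤ 6 ^ d * volume Q := by
  obtain ⟨c, r, hr, rfl⟩ := hQ.exists_eq_pi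
  have hdiam : Metric.diam (univ.pi fun i => Ioo (c i) (c i + r)) ≤ r :=
    Metric.diam_le_of_forall_dist_le hr.le fun y hy z hz => (dist_pi_le_iff hr.le).2 fun i => by
      simpa using Real.dist_le_of_mem_Icc (Ioo_subset_Icc_self (hy i trivial))
        (Ioo_subset_Icc_self (hz i trivial))
  rw [Real.volume_pi_closedBall _ (by positivity), Real.volume_pi_Ioo, Fintype.card_fin]
  simp only [add_sub_cancel_left, Finset.prod_const, Finset.card_univ, Fintype.card_fin]
  calc ENNReal.ofReal ((2 * (3 * Metric.diam _)) ^ d) ≤ ENNReal.ofReal ((6 * r) ^ d) := by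
        gcongr ENNReal.ofReal (?_ ^ d)
        linarith
    _ = 6 ^ d * ENNReal.ofReal r ^ d := by
        rw [mul_pow, ENNReal.ofReal_mul (by positivity), ENNReal.ofReal_pow hr.le,
          ENNReal.ofReal_pow (by norm_num)]
        norm_num

end IsOpenCube

lemma exists_cubeFam_forall_subset {E U : Set (Fin d → ℝ)} (hU : IsOpen U) (hEU : E ⊆ U)
    {δ : ℝ} (hδ : 0 < δ) {P : Set (Fin d → ℝ) → Prop}
    (hP : ∀ x ∈ E, ∀ η > 0, ∃ Q, IsOpenCube Q ∧ x ∈ Q ∧ Metric.diam Q < η ∧ P Q) :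
    ∃ 𝒬, CubeFam E δ 𝒬 ∧ ∀ Q ∈ 𝒬, P Q ∧ Q ⊆ U := by
  let t : Set (Set (Fin d → ℝ) × (Fin d → ℝ)) := {p | IsOpenCube p.1 ∧ p.2 ∈ E ∧ p.2 ∈ p.1 ∧
    Metric.diam p.1 < δ ∧ closure p.1 ⊆ U ∧ P p.1}
  have hfine : ∀ x ∈ E, ∀ ε > (0 : ℝ), ∃ p ∈ t, Metric.diam p.1 ≤ ε ∧ p.2 = x := by
    intro x hx ε hε
    obtain ⟨ρ, hρ, hball⟩ := Metric.isOpen_iff.1 hU x (hEU hx)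
    obtain ⟨Q, hQ, hxQ, hdiam, hPQ⟩ := hP x hx (min δ (min ε ρ)) (by positivity)
    have hcl : closure Q ⊆ U :=
      (hQ.isBounded_s17.closure_subset_closedBall_diam hxQ).trans <|
        (Metric.closedBall_subset_ball (hdiam.trans_le (by simp))).trans hball
    exact ⟨(Q, x), ⟨hQ, hx, hxQ, hdiam.trans_le (by simp), hcl, hPQ⟩,
      hdiam.le.trans (by simp), rfl⟩
  -- Radius `diam Q` (the side length when `d > 0`) spares a separate case `d = 0`.
  obtain ⟨u, hut, hu, hdisj, hcov⟩ := Vitali.exists_disjoint_covering_ae volume E t (6 ^ d)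
    (fun p => Metric.diam p.1) Prod.snd (fun p => closure p.1)
    (fun p hp => hp.1.isBounded_s17.closure_subset_closedBall_diam hp.2.2.1)
    (fun p hp => by
      push_cast
      exact (hp.1.volume_closedBall_le p.2).trans
        (mul_le_mul_right (measure_mono subset_closure) _))
    (fun p hp => ⟨p.2, hp.1.isOpen.subset_interior_closure hp.2.2.1⟩)
    (fun _ _ => isClosed_closure) hfine
  refine ⟨Prod.fst '' u, ⟨hu.image _, ?_, ?_, ?_⟩, ?_⟩
  · rintro _ ⟨p, hp, rfl⟩
    obtain ⟨hQ, hxE, hxQ, hdiam, -⟩ := hut hp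
    exact ⟨hQ, hdiam, p.2, hxQ, hxE⟩
  · rintro _ ⟨p, hp, rfl⟩ _ ⟨q, hq, rfl⟩ hne
    exact hdisj hp hq (ne_of_apply_ne Prod.fst hne)
  · refine measure_diff_sUnion_eq_zero_of_closure (hu.image _)
      (forall_mem_image.2 fun p hp => (hut hp).1.volume_frontier) ?_
    rwa [biUnion_image]
  · rintro _ ⟨p, hp, rfl⟩
    obtain ⟨-, -, -, -, hcl, hPQ⟩ := hut hp
    exact ⟨hPQ, subset_closure.trans hcl⟩

lemma CubeFam.tsum_volume {E : Set (Fin d → ℝ)} {δ : ℝ} {𝒬 : Set (Set (Fin d → ℝ))}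
    (h𝒬 : CubeFam E δ 𝒬) : ∑' Q : 𝒬, volume (Q : Set (Fin d → ℝ)) = volume (⋃₀ 𝒬) :=
  (measure_sUnion h𝒬.1 (h𝒬.2.2.1.mono' fun _ _ h => h.mono subset_closure subset_closure)
    fun Q hQ => (h𝒬.2.1 Q hQ).1.isOpen.measurableSet).symm

lemma msharp_eq_zero_of_volume_eq_zero (m : Set (Fin d → ℝ) → ENNReal) {E : Set (Fin d → ℝ)}
    (hE : volume E = 0) : msharp m E = 0 := by
  refine nonpos_iff_eq_zero.1 (iSup₂_le fun δ _ => ?_)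
  have hempty : CubeFam E δ ∅ := ⟨countable_empty, by simp, pairwise_empty _, by simpa using hE⟩
  simpa using iInf₂_le (f := fun 𝒬 (_ : CubeFam E δ 𝒬) => ∑' Q : 𝒬, m Q) ∅ hempty

lemma exists_isOpenCube_le_mul_volume {m : Set (Fin d → ℝ) → ENNReal} {b : ENNReal}
    {x : Fin d → ℝ} (hx : mMinus m x < b) {η : ℝ} (hη : 0 < η) :
    ∃ Q, IsOpenCube Q ∧ x ∈ Q ∧ Metric.diam Q < η ∧ m Q ≤ b * volume Q := by
  obtain ⟨δ, hδ, hlt⟩ := ((frequently_lt_of_liminf_lt (by isBoundedDefault) hx).and_eventually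
    (Ioo_mem_nhdsGT hη)).exists
  simp only [iInf_lt_iff, mem_ofPred_eq] at hδ
  obtain ⟨Q, ⟨hQ, hxQ, hdiam⟩, hmQ⟩ := hδ
  refine ⟨Q, hQ, hxQ, hdiam.trans hlt.2, (ENNReal.div_lt_iff ?_ ?_).1 hmQ |>.le⟩
  · exact Or.inl (hQ.isOpen.measure_ne_zero volume ⟨x, hxQ⟩)
  · exact Or.inl hQ.volume_ne_top

lemma msharp_le_mul_volume_of_isOpen {m : Set (Fin d → ℝ) → ENNReal} {b : ENNReal}
    {E U : Set (Fin d → ℝ)} (hE : ∀ x ∈ E, mMinus m x < b) (hU : IsOpen U) (hEU : E ⊆ U) :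
    msharp m E ≤ b * volume U := by
  refine iSup₂_le fun δ hδ => ?_
  obtain ⟨𝒬, h𝒬, hgood⟩ := exists_cubeFam_forall_subset hU hEU hδ
    fun x hx _ hη => exists_isOpenCube_le_mul_volume (hE x hx) hη
  calc ⨅ (𝒬 : Set (Set (Fin d → ℝ))) (_ : CubeFam E δ 𝒬), ∑' Q : 𝒬, m Q
      ≤ ∑' Q : 𝒬, m Q := iInf₂_le 𝒬 h𝒬
    _ ≤ ∑' Q : 𝒬, b * volume (Q : Set (Fin d → ℝ)) :=
        ENNReal.tsum_le_tsum fun Q => (hgood Q Q.2).1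
    _ = b * volume (⋃₀ 𝒬) := by rw [ENNReal.tsum_mul_left, h𝒬.tsum_volume]
    _ ≤ b * volume U := by
        gcongr
        exact sUnion_subset fun Q hQ => (hgood Q hQ).2

end

theorem stmt17_general {d : ℕ}
    (m : Set (Fin d → ℝ) → ENNReal)
    (b : ENNReal)
    (E : Set (Fin d → ℝ)) (hE : ∀ x ∈ E, mMinus m x < b) :
    msharp m E ≤ b * volume E := by
  rcases eq_or_ne (volume E) 0 with hE0 | hE0
  · simp [msharp_eq_zero_of_volume_eq_zero m hE0]
  rcases eq_or_ne b ⊤ with rfl | hb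
  · simp [ENNReal.top_mul hE0]
  obtain ⟨x, hx⟩ := nonempty_of_measure_ne_zero hE0
  rw [Set.measure_eq_iInf_isOpen]
  simp only [ENNReal.mul_iInf_of_ne (hE x hx).ne_bot hb, le_iInf_iff]
  exact fun U hEU hU => msharp_le_mul_volume_of_isOpen hE hU hEU

/-- (Lemma 7.5 (ii).) If `E ⊆ {x ∈ Ω : m⁻_*(x) < b}` then `m^♯(E) ≤ b |E|`. -/
theorem stmt17 {d : ℕ} (Ω : Set (Fin d → ℝ))
    (hΩopen : IsOpen Ω) (hΩbd : Bornology.IsBounded Ω)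
    (m : Set (Fin d → ℝ) → ENNReal) (hm0 : m ∅ = 0)
    (b : ENNReal) (hb : 0 < b)
    (E : Set (Fin d → ℝ)) (hEΩ : E ⊆ Ω) (hE : ∀ x ∈ E, mMinus m x < b) :
    msharp m E ≤ b * volume E :=
  stmt17_general m b E hE
end

section
/- Let Ω ⊆ ℝ^d bounded open and m a nonnegative set function on open cubes with m(∅)=0. Assume ω := limsup_{δ→0} sup_{Q⊆Ω, diam(Q)<δ} m(Q)/|Q| < ∞, and assume for a.e. x ∈ Ω: limsup_{δ→0} m(Q_δ(x))/δ^d ≤ limsup_{δ→0} m^♯(Q_δ(x))/δ^d, where Q_δ(x) := x + δ(0,1)^d. Then for a.e. x ∈ Ω, the limit lim_{δ→0} m(Q_δ(x))/δ^d exists, i.e., limsup_{δ→0} m(Q_δ(x))/δ^d = liminf_{δ→0} m(Q_δ(x))/δ^d. -/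
open Filter Set Topology MeasureTheory

/-- The open cube `Q_δ(x) = x + δ(0,1)^d`. -/
def openCube {d : ℕ} (x : Fin d → ℝ) (δ : ℝ) : Set (Fin d → ℝ) :=
  {y | ∀ i, y i ∈ Set.Ioo (x i) (x i + δ)}

/-! Let `A_t = lowDensitySet m Ω t` be the set of points lying in arbitrarily small cubes `Q ⊆ Ω`
with `m(Q) ≤ t|Q|`; it is a `G_δ` set. By Vitali's covering lemma, almost every point of `Ω`
where the lower density of `m` is `< t` lies in `A_t`. For an open `E ⊆ Ω`, a Vitali cover of `E`
by such cubes at points of `A_t` and by arbitrary small cubes inside an open neighbourhood of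
`E \ A_t` (where `m ≤ C|·|` for any `C > ω`) gives `m^♯(E) ≤ t|E| + C|E \ A_t|`. At Lebesgue
density points of `A_t` this forces `limsup m^♯(Q_δ(x))/δ^d ≤ t`. Letting `t` run over the
rationals, the upper density of `m^♯` is a.e. at most the lower density of `m`, which closes
the chain `limsup ≤ limsup^♯ ≤ liminf`. -/

open scoped ENNReal

lemma ENNReal.ofReal_pow_ne_zero {r : ℝ} (hr : 0 < r) {n : ℕ} : ENNReal.ofReal (r ^ n) ≠ 0 :=
  (ENNReal.ofReal_pos.2 (pow_pos hr n)).ne'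

section OpenCube

variable {d : ℕ}

lemma openCube_eq_pi (x : Fin d → ℝ) (r : ℝ) :
    openCube x r = univ.pi fun i => Ioo (x i) (x i + r) := by
  ext y
  simp [openCube, Set.mem_pi]

lemma isOpen_openCube (x : Fin d → ℝ) (r : ℝ) : IsOpen (openCube x r) := by
  rw [openCube_eq_pi]
  exact isOpen_set_pi finite_univ fun i _ => isOpen_Ioo

lemma nonempty_openCube (x : Fin d → ℝ) {r : ℝ} (hr : 0 < r) : (openCube x r).Nonempty :=
  ⟨fun i => x i + r / 2, fun i => ⟨by linarith, by linarith⟩⟩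

lemma closure_openCube (x : Fin d → ℝ) {r : ℝ} (hr : 0 < r) :
    closure (openCube x r) = univ.pi fun i => Icc (x i) (x i + r) := by
  rw [openCube_eq_pi, closure_pi_set]
  exact pi_congr rfl fun i _ => closure_Ioo (by linarith)

lemma self_mem_closure_openCube (x : Fin d → ℝ) {r : ℝ} (hr : 0 < r) :
    x ∈ closure (openCube x r) := by
  rw [closure_openCube x hr]
  exact fun i _ => ⟨le_rfl, by linarith⟩

lemma volume_openCube (x : Fin d → ℝ) {r : ℝ} (hr : 0 ≤ r) :
    volume (openCube x r) = ENNReal.ofReal (r ^ d) := by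
  rw [openCube_eq_pi, Real.volume_pi_Ioo]
  simp [ENNReal.ofReal_pow hr]

lemma volume_closure_openCube (x : Fin d → ℝ) {r : ℝ} (hr : 0 < r) :
    volume (closure (openCube x r)) = ENNReal.ofReal (r ^ d) := by
  rw [closure_openCube x hr, pi_univ_Icc, Real.volume_Icc_pi]
  simp [ENNReal.ofReal_pow hr.le]

lemma volume_closure_diff_openCube (x : Fin d → ℝ) {r : ℝ} (hr : 0 < r) :
    volume (closure (openCube x r) \ openCube x r) = 0 := by
  rw [measure_sdiff subset_closure (isOpen_openCube x r).measurableSet.nullMeasurableSet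
    (by simp [volume_openCube x hr.le]), volume_closure_openCube x hr,
    volume_openCube x hr.le, tsub_self]

lemma closure_openCube_subset_closedBall {x z : Fin d → ℝ} {r : ℝ} (hr : 0 < r)
    (hz : z ∈ closure (openCube x r)) : closure (openCube x r) ⊆ Metric.closedBall z r := by
  rw [closure_openCube x hr] at *
  intro y hy
  rw [Metric.mem_closedBall, dist_pi_le_iff hr.le]
  intro i
  have hyi := hy i (mem_univ i)
  have hzi := hz i (mem_univ i)
  rw [Real.dist_eq, abs_le]
  constructor <;> linarith [hyi.1, hyi.2, hzi.1, hzi.2]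

lemma diam_openCube_le (x : Fin d → ℝ) {r : ℝ} (hr : 0 < r) : Metric.diam (openCube x r) ≤ r := by
  refine Metric.diam_le_of_forall_dist_le hr.le fun y hy z hz => ?_
  simpa using (closure_openCube_subset_closedBall hr (subset_closure hz)) (subset_closure hy)

lemma eventually_closure_openCube_subset {U : Set (Fin d → ℝ)} (hU : IsOpen U) {x : Fin d → ℝ}
    (hx : x ∈ U) : ∀ᶠ r in 𝓝[>] 0, closure (openCube x r) ⊆ U := by
  obtain ⟨ρ, hρ, hball⟩ := Metric.isOpen_iff.1 hU x hx
  filter_upwards [Ioo_mem_nhdsGT hρ] with r hr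
  exact (closure_openCube_subset_closedBall hr.1 (self_mem_closure_openCube x hr.1)).trans
    ((Metric.closedBall_subset_ball hr.2).trans hball)

lemma exists_disjoint_openCube_covering_ae (s : Set (Fin d → ℝ))
    (P : (Fin d → ℝ) → ℝ → Prop)
    (fine : ∀ z ∈ s, ∀ ε > 0, ∃ y r, 0 < r ∧ r ≤ ε ∧ P y r ∧ z ∈ closure (openCube y r)) :
    ∃ u : Set ((Fin d → ℝ) × ℝ), u.Countable ∧ (∀ p ∈ u, 0 < p.2 ∧ P p.1 p.2) ∧
      (u.PairwiseDisjoint fun p => closure (openCube p.1 p.2)) ∧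
      volume (s \ ⋃ p ∈ u, openCube p.1 p.2) = 0 := by
  -- Vitali's lemma wants every cube tagged with the point `z` it was chosen for.
  let B : (Fin d → ℝ) × (Fin d → ℝ) × ℝ → Set (Fin d → ℝ) := fun a => closure (openCube a.2.1 a.2.2)
  obtain ⟨u, hut, hu, hdisj, hcov⟩ := Vitali.exists_disjoint_covering_ae volume s
    {a | 0 < a.2.2 ∧ P a.2.1 a.2.2 ∧ a.1 ∈ B a} (6 ^ d) (fun a => a.2.2) (fun a => a.1) B
    (fun a ha => closure_openCube_subset_closedBall ha.1 ha.2.2)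
    (fun a ha => by
      rw [volume_closure_openCube _ ha.1, Real.volume_pi_closedBall _ (by linarith [ha.1]),
        Fintype.card_fin, show (2 * (3 * a.2.2)) ^ d = 6 ^ d * a.2.2 ^ d by ring,
        ENNReal.ofReal_mul (by positivity), ENNReal.ofReal_pow (by norm_num)]
      simp)
    (fun a ha => (nonempty_openCube a.2.1 ha.1).mono
      ((isOpen_openCube a.2.1 a.2.2).subset_interior_iff.2 subset_closure))
    (fun a _ => isClosed_closure)
    (fun z hz ε hε => by
      obtain ⟨y, r, hr, hrε, hP, hzy⟩ := fine z hz ε hε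
      exact ⟨(z, y, r), ⟨hr, hP, hzy⟩, hrε, rfl⟩)
  refine ⟨Prod.snd '' u, hu.image _, ?_, ?_, ?_⟩
  · rintro _ ⟨a, ha, rfl⟩
    exact ⟨(hut ha).1, (hut ha).2.1⟩
  · rintro _ ⟨a, ha, rfl⟩ _ ⟨b, hb, rfl⟩ hab
    exact hdisj ha hb fun h => hab (h ▸ rfl)
  · rw [biUnion_image]
    refine measure_mono_null (fun z hz => ?_) (measure_union_null hcov
      ((measure_biUnion_null_iff hu).2 fun a ha => volume_closure_diff_openCube a.2.1 (hut ha).1))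
    by_cases hzB : z ∈ ⋃ a ∈ u, B a
    · obtain ⟨a, ha, hza⟩ := mem_iUnion₂.1 hzB
      exact Or.inr (mem_iUnion₂.2 ⟨a, ha, hza, fun h => hz.2 (mem_iUnion₂.2 ⟨a, ha, h⟩)⟩)
    · exact Or.inl ⟨hz.1, hzB⟩

lemma cubeFam_image {E : Set (Fin d → ℝ)} {δ : ℝ} {u : Set ((Fin d → ℝ) × ℝ)}
    (hu : u.Countable) (hP : ∀ p ∈ u, 0 < p.2 ∧ p.2 < δ ∧ openCube p.1 p.2 ⊆ E)
    (hdisj : u.PairwiseDisjoint fun p => closure (openCube p.1 p.2))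
    (hcov : volume (E \ ⋃ p ∈ u, openCube p.1 p.2) = 0) :
    CubeFam E δ ((fun p => openCube p.1 p.2) '' u) := by
  refine ⟨hu.image _, ?_, ?_, by rwa [sUnion_image]⟩
  · rintro _ ⟨p, hp, rfl⟩
    obtain ⟨hr, hrδ, hE⟩ := hP p hp
    obtain ⟨z, hz⟩ := nonempty_openCube p.1 hr
    exact ⟨⟨p.1, p.2, hr, rfl⟩, (diam_openCube_le p.1 hr).trans_lt hrδ, z, hz, hE hz⟩
  · rintro _ ⟨p, hp, rfl⟩ _ ⟨q, hq, rfl⟩ hne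
    exact hdisj hp hq fun h => hne (h ▸ rfl)

lemma ae_tendsto_volume_openCube_diff_div {A : Set (Fin d → ℝ)} (hA : MeasurableSet A) :
    ∀ᵐ x, x ∈ A →
      Tendsto (fun δ => volume (openCube x δ \ A) / ENNReal.ofReal (δ ^ d)) (𝓝[>] 0) (𝓝 0) := by
  filter_upwards [Besicovitch.ae_tendsto_measure_inter_div_of_measurableSet volume hA.compl]
    with x hx hxA
  rw [indicator_of_notMem (not_not.2 hxA)] at hx
  have hbound : ∀ᶠ δ in 𝓝[>] (0 : ℝ), volume (openCube x δ \ A) / ENNReal.ofReal (δ ^ d) ≤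
      2 ^ d * (volume (Aᶜ ∩ Metric.closedBall x δ) / volume (Metric.closedBall x δ)) := by
    filter_upwards [self_mem_nhdsWithin] with δ (hδ : 0 < δ)
    have hsub : openCube x δ \ A ⊆ Aᶜ ∩ Metric.closedBall x δ := fun y hy =>
      ⟨hy.2, closure_openCube_subset_closedBall hδ (self_mem_closure_openCube x hδ)
        (subset_closure hy.1)⟩
    rw [Real.volume_pi_closedBall x hδ.le, Fintype.card_fin, mul_pow,
      ENNReal.ofReal_mul (by positivity), ENNReal.ofReal_pow zero_le_two, ENNReal.ofReal_ofNat,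
      ← mul_div_assoc, ENNReal.mul_div_mul_left _ _ (by simp) (by simp)]
    gcongr
  refine tendsto_of_tendsto_of_tendsto_of_le_of_le' tendsto_const_nhds ?_
    (Eventually.of_forall fun δ => zero_le) hbound
  simpa using ENNReal.Tendsto.const_mul hx (Or.inr (by simp))

end OpenCube

section LowDensity

variable {d : ℕ}

def IsLowDensityCube (m : Set (Fin d → ℝ) → ℝ≥0∞) (Ω : Set (Fin d → ℝ)) (t : ℝ≥0∞)
    (y : Fin d → ℝ) (r : ℝ) : Prop :=
  0 < r ∧ openCube y r ⊆ Ω ∧ m (openCube y r) ≤ t * volume (openCube y r)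

def lowDensityCover (m : Set (Fin d → ℝ) → ℝ≥0∞) (Ω : Set (Fin d → ℝ)) (t : ℝ≥0∞) (σ : ℝ) :
    Set (Fin d → ℝ) :=
  ⋃ (y) (r) (_ : IsLowDensityCube m Ω t y r ∧ r < σ), openCube y r

def lowDensitySet (m : Set (Fin d → ℝ) → ℝ≥0∞) (Ω : Set (Fin d → ℝ)) (t : ℝ≥0∞) :
    Set (Fin d → ℝ) :=
  ⋂ n : ℕ, lowDensityCover m Ω t (1 / (n + 1))

lemma isOpen_lowDensityCover (m : Set (Fin d → ℝ) → ℝ≥0∞) (Ω : Set (Fin d → ℝ)) (t : ℝ≥0∞)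
    (σ : ℝ) : IsOpen (lowDensityCover m Ω t σ) :=
  isOpen_iUnion fun y => isOpen_iUnion fun r => isOpen_iUnion fun _ => isOpen_openCube y r

lemma measurableSet_lowDensitySet (m : Set (Fin d → ℝ) → ℝ≥0∞) (Ω : Set (Fin d → ℝ))
    (t : ℝ≥0∞) : MeasurableSet (lowDensitySet m Ω t) :=
  .iInter fun _ => (isOpen_lowDensityCover m Ω t _).measurableSet

variable {m : Set (Fin d → ℝ) → ℝ≥0∞} {Ω : Set (Fin d → ℝ)}

lemma exists_isLowDensityCube_of_mem_lowDensitySet {t : ℝ≥0∞} {x : Fin d → ℝ}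
    (hx : x ∈ lowDensitySet m Ω t) {ε : ℝ} (hε : 0 < ε) :
    ∃ y r, IsLowDensityCube m Ω t y r ∧ r < ε ∧ x ∈ openCube y r := by
  obtain ⟨n, hn⟩ := exists_nat_one_div_lt hε
  obtain ⟨y, r, ⟨hyr, hrn⟩, hxy⟩ : ∃ y r, (IsLowDensityCube m Ω t y r ∧ r < 1 / (n + 1)) ∧
      x ∈ openCube y r := by
    simpa only [lowDensityCover, mem_iUnion, exists_prop] using mem_iInter.1 hx n
  exact ⟨y, r, hyr, hrn.trans hn, hxy⟩

lemma frequently_isLowDensityCube_of_liminf_lt (hΩ : IsOpen Ω) {t : ℝ≥0∞} {x : Fin d → ℝ}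
    (hx : x ∈ Ω)
    (hL : liminf (fun δ => m (openCube x δ) / ENNReal.ofReal (δ ^ d)) (𝓝[>] 0) < t) :
    ∃ᶠ r in 𝓝[>] 0, IsLowDensityCube m Ω t x r := by
  refine (frequently_lt_of_liminf_lt (by isBoundedDefault) hL).mp ?_
  filter_upwards [eventually_closure_openCube_subset hΩ hx, self_mem_nhdsWithin]
    with r hrΩ (hr : 0 < r) hlt
  rw [ENNReal.div_lt_iff (Or.inl (ENNReal.ofReal_pow_ne_zero hr)) (Or.inl ENNReal.ofReal_ne_top),
    ← volume_openCube x hr.le] at hlt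
  exact ⟨hr, subset_closure.trans hrΩ, hlt.le⟩

lemma volume_diff_lowDensityCover (hΩ : IsOpen Ω) (t : ℝ≥0∞) {σ : ℝ} (hσ : 0 < σ) :
    volume ({x ∈ Ω | liminf (fun δ => m (openCube x δ) / ENNReal.ofReal (δ ^ d)) (𝓝[>] 0) < t}
      \ lowDensityCover m Ω t σ) = 0 := by
  set S := {x ∈ Ω | liminf (fun δ => m (openCube x δ) / ENNReal.ofReal (δ ^ d)) (𝓝[>] 0) < t}
  obtain ⟨u, -, hu, -, hcov⟩ := exists_disjoint_openCube_covering_ae (S \ lowDensityCover m Ω t σ)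
    (fun y r => IsLowDensityCube m Ω t y r ∧ r < σ) fun z hz ε hε => by
      obtain ⟨r, hr, hrεσ⟩ := ((frequently_isLowDensityCube_of_liminf_lt hΩ hz.1.1
        hz.1.2).and_eventually (Ioo_mem_nhdsGT (lt_min hε hσ))).exists
      exact ⟨z, r, hr.1, (hrεσ.2.trans_le (min_le_left _ _)).le,
        ⟨hr, hrεσ.2.trans_le (min_le_right _ _)⟩, self_mem_closure_openCube z hr.1⟩
  refine measure_mono_null (fun z hz => ?_) hcov
  refine ⟨hz, fun hzu => hz.2 ?_⟩
  obtain ⟨p, hp, hzp⟩ := mem_iUnion₂.1 hzu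
  exact mem_iUnion₂.2 ⟨p.1, p.2, mem_iUnion.2 ⟨(hu p hp).2, hzp⟩⟩

lemma ae_restrict_mem_lowDensitySet (hΩ : IsOpen Ω) (t : ℝ≥0∞) :
    ∀ᵐ x ∂volume.restrict Ω,
      liminf (fun δ => m (openCube x δ) / ENNReal.ofReal (δ ^ d)) (𝓝[>] 0) < t →
        x ∈ lowDensitySet m Ω t := by
  rw [ae_restrict_iff' hΩ.measurableSet, ae_iff]
  refine measure_mono_null (fun x hx => ?_) (measure_iUnion_null fun n : ℕ =>
    volume_diff_lowDensityCover (m := m) hΩ t (σ := 1 / (n + 1)) Nat.one_div_pos_of_nat)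
  simp only [Classical.not_imp, lowDensitySet, mem_iInter, not_forall] at hx
  obtain ⟨hxΩ, hL, n, hn⟩ := hx
  exact mem_iUnion.2 ⟨n, ⟨hxΩ, hL⟩, hn⟩

end LowDensity

section Msharp

variable {d : ℕ} {m : Set (Fin d → ℝ) → ℝ≥0∞} {Ω : Set (Fin d → ℝ)}

lemma exists_pos_forall_le_mul_volume_of_cubeOmega_lt {C : ℝ≥0∞} (hC : cubeOmega m Ω < C) :
    ∃ δ₀ > 0, ∀ y r, 0 < r → r < δ₀ → openCube y r ⊆ Ω →
      m (openCube y r) ≤ C * volume (openCube y r) := by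
  obtain ⟨δ₀, hδ₀C, hδ₀⟩ :=
    ((eventually_lt_of_limsup_lt hC (by isBoundedDefault)).and self_mem_nhdsWithin).exists
  refine ⟨δ₀, hδ₀, fun y r hr hrδ₀ hΩ => ?_⟩
  have hmem : openCube y r ∈ {Q | IsOpenCube Q ∧ Q ⊆ Ω ∧ Metric.diam Q < δ₀} :=
    ⟨⟨y, r, hr, rfl⟩, hΩ, (diam_openCube_le y hr).trans_lt hrδ₀⟩
  have hlt : m (openCube y r) / volume (openCube y r) < C :=
    (le_biSup (fun Q => m Q / volume Q) hmem).trans_lt hδ₀C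
  rw [volume_openCube y hr.le] at hlt ⊢
  exact ((ENNReal.div_lt_iff (Or.inl (ENNReal.ofReal_pow_ne_zero hr))
    (Or.inl ENNReal.ofReal_ne_top)).1 hlt).le

variable {t C : ℝ≥0∞} {δ₀ : ℝ}

lemma exists_small_cube_subset_or_isLowDensityCube {E U : Set (Fin d → ℝ)} (hE : IsOpen E)
    (hU : IsOpen U) (hEU : E \ lowDensitySet m Ω t ⊆ U) {z : Fin d → ℝ} (hz : z ∈ E)
    {ε σ : ℝ} (hε : 0 < ε) (hσ : 0 < σ) :
    ∃ y r, 0 < r ∧ r ≤ ε ∧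
      (r < σ ∧ closure (openCube y r) ⊆ E ∧ (openCube y r ⊆ U ∨ IsLowDensityCube m Ω t y r)) ∧
      z ∈ closure (openCube y r) := by
  by_cases hzU : z ∈ U
  · obtain ⟨r, hrEU, hr⟩ := ((eventually_closure_openCube_subset (hE.inter hU)
      ⟨hz, hzU⟩).and (Ioo_mem_nhdsGT (lt_min hε hσ))).exists
    obtain ⟨hrε, hrσ⟩ := lt_min_iff.1 hr.2
    exact ⟨z, r, hr.1, hrε.le, ⟨hrσ, hrEU.trans inter_subset_left,
      .inl (subset_closure.trans (hrEU.trans inter_subset_right))⟩,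
      self_mem_closure_openCube z hr.1⟩
  · obtain ⟨ρ, hρ, hball⟩ := Metric.isOpen_iff.1 hE z hz
    obtain ⟨y, r, hlow, hr, hzy⟩ := exists_isLowDensityCube_of_mem_lowDensitySet
      (not_not.1 fun h => hzU (hEU ⟨hz, h⟩)) (lt_min (lt_min hε hσ) hρ)
    obtain ⟨⟨hrε, hrσ⟩, hrρ⟩ : (r < ε ∧ r < σ) ∧ r < ρ := by simpa only [lt_min_iff] using hr
    refine ⟨y, r, hlow.1, hrε.le, ⟨hrσ, ?_, .inr hlow⟩, subset_closure hzy⟩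
    exact (closure_openCube_subset_closedBall hlow.1 (subset_closure hzy)).trans
      ((Metric.closedBall_subset_ball hrρ).trans hball)

lemma msharp_le_add_volume_of_isOpen (hδ₀ : 0 < δ₀)
    (hC : ∀ y r, 0 < r → r < δ₀ → openCube y r ⊆ Ω →
      m (openCube y r) ≤ C * volume (openCube y r))
    {E U : Set (Fin d → ℝ)} (hE : IsOpen E) (hEΩ : E ⊆ Ω) (hU : IsOpen U)
    (hEU : E \ lowDensitySet m Ω t ⊆ U) :
    msharp m E ≤ t * volume E + C * volume U := by
  refine iSup₂_le fun δ hδ => ?_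
  let cube : (Fin d → ℝ) × ℝ → Set (Fin d → ℝ) := fun p => openCube p.1 p.2
  obtain ⟨u, hu, hP, hdisj, hcov⟩ := exists_disjoint_openCube_covering_ae E _ fun z hz ε hε =>
    exists_small_cube_subset_or_isLowDensityCube hE hU hEU hz hε (lt_min hδ hδ₀)
  have hbound : ∀ p ∈ u, m (cube p) ≤ t * volume (cube p) + C * volume (cube p ∩ U) := by
    rintro p hp
    obtain ⟨hr, hrδ, hpE, hpU | hlow⟩ := hP p hp
    · rw [inter_eq_left.2 hpU]
      exact le_add_left (hC p.1 p.2 hr (hrδ.trans_le (min_le_right _ _))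
        ((subset_closure.trans hpE).trans hEΩ))
    · exact le_add_right hlow.2.2
  have hdisj' : u.PairwiseDisjoint cube := hdisj.mono fun p => subset_closure
  have hfam : CubeFam E δ (cube '' u) := cubeFam_image hu (fun p hp => ⟨(hP p hp).1,
    (hP p hp).2.1.trans_le (min_le_left _ _), subset_closure.trans (hP p hp).2.2.1⟩) hdisj hcov
  calc ⨅ (𝒬) (_ : CubeFam E δ 𝒬), ∑' Q : 𝒬, m Q
      ≤ ∑' Q : cube '' u, m Q := iInf₂_le _ hfam
    _ ≤ ∑' p : u, m (cube p) := ENNReal.tsum_le_tsum_comp_of_surjective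
        imageFactorization_surjective (fun Q : cube '' u => m Q)
    _ ≤ ∑' p : u, (t * volume (cube p) + C * volume (cube p ∩ U)) :=
        ENNReal.tsum_le_tsum fun p => hbound p p.2
    _ = t * volume (⋃ p ∈ u, cube p) + C * volume (⋃ p ∈ u, cube p ∩ U) := by
        rw [ENNReal.tsum_add, ENNReal.tsum_mul_left, ENNReal.tsum_mul_left,
          measure_biUnion hu hdisj' fun p _ => (isOpen_openCube p.1 p.2).measurableSet,
          measure_biUnion hu (hdisj'.mono fun p => inter_subset_left)
            fun p _ => ((isOpen_openCube p.1 p.2).inter hU).measurableSet]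
    _ ≤ t * volume E + C * volume U := by
        gcongr
        · exact iUnion₂_subset fun p hp => subset_closure.trans (hP p hp).2.2.1
        · exact iUnion₂_subset fun p _ => inter_subset_right

lemma msharp_le_add_volume_diff (hCtop : C ≠ ⊤) (hδ₀ : 0 < δ₀)
    (hC : ∀ y r, 0 < r → r < δ₀ → openCube y r ⊆ Ω →
      m (openCube y r) ≤ C * volume (openCube y r))
    {E : Set (Fin d → ℝ)} (hE : IsOpen E) (hEΩ : E ⊆ Ω) :
    msharp m E ≤ t * volume E + C * volume (E \ lowDensitySet m Ω t) := by
  refine ENNReal.le_of_forall_pos_le_add fun ε hε _ => ?_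
  obtain ⟨U, hEU, hU, hUle⟩ := (E \ lowDensitySet m Ω t).exists_isOpen_le_add volume
    (ENNReal.div_pos (ENNReal.coe_ne_zero.2 hε.ne') hCtop).ne'
  calc msharp m E ≤ t * volume E + C * volume U :=
        msharp_le_add_volume_of_isOpen hδ₀ hC hE hEΩ hU hEU
    _ ≤ t * volume E + C * (volume (E \ lowDensitySet m Ω t) + ε / C) := by gcongr
    _ ≤ t * volume E + C * volume (E \ lowDensitySet m Ω t) + ε := by
        rw [mul_add, ← add_assoc]
        gcongr
        exact ENNReal.mul_div_le

end Msharp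

lemma MeasureTheory.ae_le_of_forall_ae_lt_imp_le {α : Type*} [MeasurableSpace α] {μ : Measure α}
    {f g : α → ℝ≥0∞} (h : ∀ t, ∀ᵐ x ∂μ, f x < t → g x ≤ t) : ∀ᵐ x ∂μ, g x ≤ f x := by
  filter_upwards [ae_all_iff.2 fun q : ℚ => h (q : ℝ).toNNReal] with x hx
  by_contra! hfg
  obtain ⟨q, -, hfq, hqg⟩ := ENNReal.lt_iff_exists_rat_btwn.1 hfg
  exact (hx q hfq).not_gt hqg

lemma ae_limsup_msharp_div_le_of_liminf_lt {d : ℕ} {m : Set (Fin d → ℝ) → ℝ≥0∞}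
    {Ω : Set (Fin d → ℝ)} (hΩ : IsOpen Ω) (hω : cubeOmega m Ω < ⊤) (t : ℝ≥0∞) :
    ∀ᵐ x ∂volume.restrict Ω,
      liminf (fun δ => m (openCube x δ) / ENNReal.ofReal (δ ^ d)) (𝓝[>] 0) < t →
        limsup (fun δ => msharp m (openCube x δ) / ENNReal.ofReal (δ ^ d)) (𝓝[>] 0) ≤ t := by
  obtain ⟨C, hωC, hCtop⟩ := exists_between hω
  obtain ⟨δ₀, hδ₀, hC⟩ := exists_pos_forall_le_mul_volume_of_cubeOmega_lt hωC
  set A := lowDensitySet m Ω t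
  filter_upwards [ae_restrict_mem_lowDensitySet hΩ t, ae_restrict_mem hΩ.measurableSet,
    ae_restrict_of_ae (ae_tendsto_volume_openCube_diff_div (measurableSet_lowDensitySet m Ω t))]
    with x hxA hxΩ hdens hL
  have hlim : Tendsto (fun δ => t + C * (volume (openCube x δ \ A) / ENNReal.ofReal (δ ^ d)))
      (𝓝[>] 0) (𝓝 t) := by
    simpa using tendsto_const_nhds.add (ENNReal.Tendsto.const_mul (hdens (hxA hL)) (.inr hCtop.ne))
  rw [← hlim.limsup_eq]
  refine limsup_le_limsup ?_
  filter_upwards [eventually_closure_openCube_subset hΩ hxΩ, self_mem_nhdsWithin]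
    with δ hδΩ (hδ : 0 < δ)
  have hvol := volume_openCube x hδ.le
  calc msharp m (openCube x δ) / ENNReal.ofReal (δ ^ d)
      ≤ (t * ENNReal.ofReal (δ ^ d) + C * volume (openCube x δ \ A)) / ENNReal.ofReal (δ ^ d) := by
        gcongr
        rw [← hvol]
        exact msharp_le_add_volume_diff hCtop.ne hδ₀ hC (isOpen_openCube x δ)
          (subset_closure.trans hδΩ)
    _ = t + C * (volume (openCube x δ \ A) / ENNReal.ofReal (δ ^ d)) := by
        rw [ENNReal.add_div, mul_div_assoc, mul_div_assoc,
          ENNReal.div_self (ENNReal.ofReal_pow_ne_zero hδ) ENNReal.ofReal_ne_top, mul_one]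

theorem stmt19_general {d : ℕ} (Ω : Set (Fin d → ℝ))
    (hΩopen : IsOpen Ω)
    (m : Set (Fin d → ℝ) → ENNReal)
    (hω : cubeOmega m Ω < ⊤)
    (hae : ∀ᵐ x ∂(volume.restrict Ω),
      Filter.limsup (fun δ : ℝ => m (openCube x δ) / ENNReal.ofReal (δ ^ d))
          (nhdsWithin 0 (Set.Ioi 0)) ≤
        Filter.limsup (fun δ : ℝ => msharp m (openCube x δ) / ENNReal.ofReal (δ ^ d))
          (nhdsWithin 0 (Set.Ioi 0))) :
    ∀ᵐ x ∂(volume.restrict Ω),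
      Filter.limsup (fun δ : ℝ => m (openCube x δ) / ENNReal.ofReal (δ ^ d))
          (nhdsWithin 0 (Set.Ioi 0)) =
        Filter.liminf (fun δ : ℝ => m (openCube x δ) / ENNReal.ofReal (δ ^ d))
          (nhdsWithin 0 (Set.Ioi 0)) := by
  filter_upwards [hae, ae_le_of_forall_ae_lt_imp_le
    (ae_limsup_msharp_div_le_of_liminf_lt hΩopen hω)] with x hmsharp hliminf
  exact le_antisymm (hmsharp.trans hliminf) liminf_le_limsup

/-- (Proposition 7.1.) If `ω < ∞` and, for a.e. `x ∈ Ω`,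
`limsup_{δ→0} m(Q_δ(x))/δ^d ≤ limsup_{δ→0} m^♯(Q_δ(x))/δ^d`, then for a.e. `x ∈ Ω` the
limit `lim_{δ→0} m(Q_δ(x))/δ^d` exists, i.e. limsup = liminf. -/
theorem stmt19 {d : ℕ} (Ω : Set (Fin d → ℝ))
    (hΩopen : IsOpen Ω) (hΩbd : Bornology.IsBounded Ω)
    (m : Set (Fin d → ℝ) → ENNReal) (hm0 : m ∅ = 0)
    (hω : cubeOmega m Ω < ⊤)
    (hae : ∀ᵐ x ∂(volume.restrict Ω),
      Filter.limsup (fun δ : ℝ => m (openCube x δ) / ENNReal.ofReal (δ ^ d))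
          (nhdsWithin 0 (Set.Ioi 0)) ≤
        Filter.limsup (fun δ : ℝ => msharp m (openCube x δ) / ENNReal.ofReal (δ ^ d))
          (nhdsWithin 0 (Set.Ioi 0))) :
    ∀ᵐ x ∂(volume.restrict Ω),
      Filter.limsup (fun δ : ℝ => m (openCube x δ) / ENNReal.ofReal (δ ^ d))
          (nhdsWithin 0 (Set.Ioi 0)) =
        Filter.liminf (fun δ : ℝ => m (openCube x δ) / ENNReal.ofReal (δ ^ d))
          (nhdsWithin 0 (Set.Ioi 0)) :=
  stmt19_general Ω hΩopen m hω hae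
end
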